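/- arXiv:1910.10195 — 5 statements merged into one kernel-verified Lean document; each statement's English description precedes it below -/
import Mathlib

section
/- Let B > 0 and let (a_j)_{j ∈ ℤ∖{0}} and (b_j)_{j ∈ ℤ∖{0}} be real sequences satisfying |a_j| ≤ (B/|j|)^{1/4} and |b_j| ≤ (B/|j|)^{1/4} for all j. Suppose that for every integer k ≥ 5, the (absolutely convergent) power sums agree: ∑_{j ∈ ℤ∖{0}} a_j^k = ∑_{j ∈ ℤ∖{0}} b_j^k. Then for every real number r ≠ 0, the set of indices j with a_j = r is finite, the set of indices j with b_j = r is finite, and these two sets have the same cardinality. -/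
open Filter

namespace Stmt4Aux

variable {ι : Type*}

lemma finite_ge {a : ι → ℝ} (ha : Summable fun i => |a i| ^ 5) {ε : ℝ} (hε : 0 < ε) :
    {i | ε ≤ |a i|}.Finite := by
  have h2 : ∀ᶠ i in cofinite, |a i| ^ 5 < ε ^ 5 :=
    ha.tendsto_cofinite_zero (Iio_mem_nhds (by positivity))
  have hfin : {i | ¬ (|a i| ^ 5 < ε ^ 5)}.Finite := by
    simpa [Filter.eventually_cofinite] using h2
  refine hfin.subset fun i hi => ?_
  simp only [Set.mem_setOf_eq, not_lt] at *
  exact pow_le_pow_left₀ hε.le hi 5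

/-- everything is bounded by some `D ≥ 1`. -/
lemma exists_bound {a : ι → ℝ} (ha : Summable fun i => |a i| ^ 5) :
    ∃ D : ℝ, 1 ≤ D ∧ ∀ i, |a i| ≤ D := by
  have hfin : {i | (1:ℝ) ≤ |a i|}.Finite := finite_ge ha one_pos
  refine ⟨1 + ∑ i ∈ hfin.toFinset, |a i|, le_add_of_nonneg_right (Finset.sum_nonneg fun _ _ => abs_nonneg _), fun i => ?_⟩
  by_cases h : (1:ℝ) ≤ |a i|
  · have hi : i ∈ hfin.toFinset := by simpa using h
    have := Finset.single_le_sum (f := fun i => |a i|) (fun j _ => abs_nonneg _) hi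
    linarith
  · push_neg at h
    have : (0:ℝ) ≤ ∑ i ∈ hfin.toFinset, |a i| := Finset.sum_nonneg fun _ _ => abs_nonneg _
    linarith

lemma summable_abs_pow {a : ι → ℝ} (ha : Summable fun i => |a i| ^ 5) {k : ℕ} (hk : 5 ≤ k) :
    Summable fun i => |a i| ^ k := by
  obtain ⟨D, hD1, hD⟩ := exists_bound ha
  refine Summable.of_nonneg_of_le (fun i => by positivity)
    (fun i => ?_) (ha.mul_right (D ^ (k - 5)))
  have : |a i| ^ k = |a i| ^ 5 * |a i| ^ (k - 5) := by
    rw [← pow_add]; congr 1; omega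
  rw [this]
  exact mul_le_mul_of_nonneg_left (pow_le_pow_left₀ (abs_nonneg _) (hD i) _) (by positivity)

lemma summable_pow {a : ι → ℝ} (ha : Summable fun i => |a i| ^ 5) {k : ℕ} (hk : 5 ≤ k) :
    Summable fun i => a i ^ k := by
  refine Summable.of_abs ?_
  simpa [abs_pow] using summable_abs_pow ha hk

/-- bound on tsum of `k`-th powers when `|a i| ≤ M'`. -/
lemma tsum_pow_bound {a : ι → ℝ} (ha : Summable fun i => |a i| ^ 5) {M' : ℝ} (hM' : 0 ≤ M')
    (hbd : ∀ i, |a i| ≤ M') {k : ℕ} (hk : 5 ≤ k) :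
    |∑' i, a i ^ k| ≤ (∑' i, |a i| ^ 5) * M' ^ (k - 5) := by
  have hs : Summable fun i => ‖a i ^ k‖ := by
    simpa [Real.norm_eq_abs, abs_pow] using summable_abs_pow ha hk
  have h1 : ‖∑' i, a i ^ k‖ ≤ ∑' i, ‖a i ^ k‖ := norm_tsum_le_tsum_norm hs
  rw [Real.norm_eq_abs] at h1
  simp only [Real.norm_eq_abs] at h1
  refine h1.trans ?_
  have h2 : ∑' i, |a i ^ k| ≤ ∑' i, |a i| ^ 5 * M' ^ (k - 5) := by
    refine Summable.tsum_le_tsum (fun i => ?_) (by simpa [abs_pow] using summable_abs_pow ha hk)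
      (ha.mul_right _)
    rw [abs_pow]
    have : |a i| ^ k = |a i| ^ 5 * |a i| ^ (k - 5) := by rw [← pow_add]; congr 1; omega
    rw [this]
    exact mul_le_mul_of_nonneg_left (pow_le_pow_left₀ (abs_nonneg _) (hbd i) _) (by positivity)
  simpa [tsum_mul_right] using h2

lemma eq_zero_of_le_geom {c C ρ : ℝ} (h0 : 0 ≤ ρ) (h1 : ρ < 1)
    (h : ∀ m : ℕ, |c| ≤ C * ρ ^ m) : c = 0 := by
  have ht : Tendsto (fun m : ℕ => C * ρ ^ m) atTop (nhds 0) := by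
    simpa using (tendsto_pow_atTop_nhds_zero_of_lt_one h0 h1).const_mul C
  have : |c| ≤ 0 := ge_of_tendsto' ht h
  have := abs_nonneg c
  have : |c| = 0 := le_antisymm ‹|c| ≤ 0› ‹0 ≤ |c|›
  exact abs_eq_zero.mp this


/-- splitting off the top-level terms. -/
lemma tsum_split {a : ι → ℝ} (ha : Summable fun i => |a i| ^ 5) {M : ℝ} (hM : 0 < M)
    {k : ℕ} (hk : 5 ≤ k) :
    ∑' i, a i ^ k = (∑' i, (if |a i| = M then 0 else a i) ^ k)
      + ({i | a i = M}.ncard : ℝ) * M ^ k + ({i | a i = -M}.ncard : ℝ) * (-M) ^ k := by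
  set a' : ι → ℝ := fun i => if |a i| = M then 0 else a i with ha'def
  have hMne : M ≠ -M := by intro h; linarith
  have habs' : ∀ i, |a' i| ≤ |a i| := by
    intro i; by_cases h : |a i| = M <;> simp [ha'def, h, abs_nonneg, hM.le]
  have ha' : Summable fun i => |a' i| ^ 5 :=
    ha.of_nonneg_of_le (fun i => by positivity)
      (fun i => pow_le_pow_left₀ (abs_nonneg _) (habs' i) 5)
  have hFP : {i | a i = M}.Finite :=
    (finite_ge ha hM).subset fun i hi => by simp only [Set.mem_setOf_eq] at *; rw [hi, abs_of_pos hM]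
  have hFN : {i | a i = -M}.Finite :=
    (finite_ge ha hM).subset fun i hi => by
      simp only [Set.mem_setOf_eq] at *; rw [hi, abs_neg, abs_of_pos hM]
  set fP : ι → ℝ := fun i => if a i = M then M ^ k else 0 with hfP
  set fN : ι → ℝ := fun i => if a i = -M then (-M) ^ k else 0 with hfN
  have hpt : ∀ i, a i ^ k = a' i ^ k + fP i + fN i := by
    intro i
    by_cases h : |a i| = M
    · rcases (abs_eq hM.le).mp h with h1 | h1
      · have h2 : a i ≠ -M := by rw [h1]; exact hMne
        simp [ha'def, hfP, hfN, h, h1, h2, hM.le, hMne, zero_pow (by omega : k ≠ 0)]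
      · have h2 : a i ≠ M := by rw [h1]; exact fun hh => hMne hh.symm
        have hMne' : -M ≠ M := fun hh => hMne hh.symm
        simp [ha'def, hfP, hfN, h, h1, h2, hM.le, hMne, hMne', zero_pow (by omega : k ≠ 0)]
    · have h1 : a i ≠ M := fun hh => h (by rw [hh, abs_of_pos hM])
      have h2 : a i ≠ -M := fun hh => h (by rw [hh, abs_neg, abs_of_pos hM])
      simp [ha'def, hfP, hfN, h, h1, h2]
  have hs' : Summable fun i => a' i ^ k := summable_pow ha' hk
  have hsP : Summable fP :=
    summable_of_ne_finset_zero (s := hFP.toFinset) fun i hi => by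
      simp only [Set.Finite.mem_toFinset, Set.mem_setOf_eq] at hi; simp [hfP, hi]
  have hsN : Summable fN :=
    summable_of_ne_finset_zero (s := hFN.toFinset) fun i hi => by
      simp only [Set.Finite.mem_toFinset, Set.mem_setOf_eq] at hi; simp [hfN, hi]
  have htP : ∑' i, fP i = ({i | a i = M}.ncard : ℝ) * M ^ k := by
    rw [tsum_eq_sum (s := hFP.toFinset) (fun i hi => by
      simp only [Set.Finite.mem_toFinset, Set.mem_setOf_eq] at hi; simp [hfP, hi])]
    have hc : ∑ i ∈ hFP.toFinset, fP i = ∑ i ∈ hFP.toFinset, M ^ k :=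
      Finset.sum_congr rfl (fun i hi => by
        simp only [Set.Finite.mem_toFinset, Set.mem_setOf_eq] at hi; simp [hfP, hi])
    rw [hc, Finset.sum_const, nsmul_eq_mul, Set.ncard_eq_toFinset_card _ hFP]
  have htN : ∑' i, fN i = ({i | a i = -M}.ncard : ℝ) * (-M) ^ k := by
    rw [tsum_eq_sum (s := hFN.toFinset) (fun i hi => by
      simp only [Set.Finite.mem_toFinset, Set.mem_setOf_eq] at hi; simp [hfN, hi])]
    have hc : ∑ i ∈ hFN.toFinset, fN i = ∑ i ∈ hFN.toFinset, (-M) ^ k :=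
      Finset.sum_congr rfl (fun i hi => by
        simp only [Set.Finite.mem_toFinset, Set.mem_setOf_eq] at hi; simp [hfN, hi])
    rw [hc, Finset.sum_const, nsmul_eq_mul, Set.ncard_eq_toFinset_card _ hFN]
  calc ∑' i, a i ^ k = ∑' i, (a' i ^ k + fP i + fN i) := tsum_congr hpt
    _ = (∑' i, (a' i ^ k + fP i)) + ∑' i, fN i := Summable.tsum_add (hs'.add hsP) hsN
    _ = (∑' i, a' i ^ k) + (∑' i, fP i) + ∑' i, fN i := by rw [Summable.tsum_add hs' hsP]
    _ = _ := by rw [htP, htN]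

/-- the finite set of relevant values. -/
lemma Vfin (a b : ι → ℝ) (ha : Summable fun i => |a i| ^ 5) (hb : Summable fun i => |b i| ^ 5)
    {r : ℝ} (hr : r ≠ 0) :
    {v : ℝ | |r| ≤ v ∧ ((∃ i, |a i| = v) ∨ ∃ i, |b i| = v)}.Finite := by
  have hr0 : 0 < |r| := abs_pos.mpr hr
  have h1 : ((fun i => |a i|) '' {i | |r| ≤ |a i|}).Finite := (finite_ge ha hr0).image _
  have h2 : ((fun i => |b i|) '' {i | |r| ≤ |b i|}).Finite := (finite_ge hb hr0).image _
  refine (h1.union h2).subset fun v hv => ?_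
  obtain ⟨hvr, ⟨i, hi⟩ | ⟨i, hi⟩⟩ := hv
  · exact Or.inl ⟨i, by simp only [Set.mem_setOf_eq]; rw [hi]; exact hvr, hi⟩
  · exact Or.inr ⟨i, by simp only [Set.mem_setOf_eq]; rw [hi]; exact hvr, hi⟩

lemma key (n : ℕ) (a b : ι → ℝ) (ha : Summable fun i => |a i| ^ 5)
    (hb : Summable fun i => |b i| ^ 5)
    (hpow : ∀ k : ℕ, 5 ≤ k → ∑' i, a i ^ k = ∑' i, b i ^ k)
    (r : ℝ) (hr : r ≠ 0)
    (hcard : {v : ℝ | |r| ≤ v ∧ ((∃ i, |a i| = v) ∨ ∃ i, |b i| = v)}.ncard ≤ n) :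
    {i | a i = r}.ncard = {i | b i = r}.ncard := by
  induction n generalizing a b with
  | zero =>
    have hVfin := Vfin a b ha hb hr
    have hV : {v : ℝ | |r| ≤ v ∧ ((∃ i, |a i| = v) ∨ ∃ i, |b i| = v)} = ∅ :=
      (Set.ncard_eq_zero hVfin).mp (Nat.le_zero.mp hcard)
    have hea : {i | a i = r} = ∅ := by
      ext i; simp only [Set.mem_setOf_eq, Set.mem_empty_iff_false, iff_false]
      intro hi
      have : |a i| ∈ {v : ℝ | |r| ≤ v ∧ ((∃ i, |a i| = v) ∨ ∃ i, |b i| = v)} :=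
        ⟨by rw [hi], Or.inl ⟨i, rfl⟩⟩
      rw [hV] at this; exact this
    have heb : {i | b i = r} = ∅ := by
      ext i; simp only [Set.mem_setOf_eq, Set.mem_empty_iff_false, iff_false]
      intro hi
      have : |b i| ∈ {v : ℝ | |r| ≤ v ∧ ((∃ i, |a i| = v) ∨ ∃ i, |b i| = v)} :=
        ⟨by rw [hi], Or.inr ⟨i, rfl⟩⟩
      rw [hV] at this; exact this
    rw [hea, heb]
  | succ n ih =>
    have hVfin := Vfin a b ha hb hr
    set V : Set ℝ := {v : ℝ | |r| ≤ v ∧ ((∃ i, |a i| = v) ∨ ∃ i, |b i| = v)} with hVdef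
    by_cases hVe : V = ∅
    · -- same as zero case
      have hea : {i | a i = r} = ∅ := by
        ext i; simp only [Set.mem_setOf_eq, Set.mem_empty_iff_false, iff_false]
        intro hi
        have : |a i| ∈ V := ⟨by rw [hi], Or.inl ⟨i, rfl⟩⟩
        rw [hVe] at this; exact this
      have heb : {i | b i = r} = ∅ := by
        ext i; simp only [Set.mem_setOf_eq, Set.mem_empty_iff_false, iff_false]
        intro hi
        have : |b i| ∈ V := ⟨by rw [hi], Or.inr ⟨i, rfl⟩⟩
        rw [hVe] at this; exact this
      rw [hea, heb]
    · have hVne : V.Nonempty := Set.nonempty_iff_ne_empty.mpr hVe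
      have hsne : hVfin.toFinset.Nonempty := by
        rwa [Set.Finite.toFinset_nonempty]
      set M : ℝ := hVfin.toFinset.max' hsne with hMdef
      have hMV : M ∈ V := by
        have := hVfin.toFinset.max'_mem hsne; rwa [Set.Finite.mem_toFinset] at this
      have hMmax : ∀ v ∈ V, v ≤ M := fun v hv =>
        hVfin.toFinset.le_max' v (by rwa [Set.Finite.mem_toFinset])
      have hrM : |r| ≤ M := hMV.1
      have hr0 : 0 < |r| := abs_pos.mpr hr
      have hM0 : 0 < M := lt_of_lt_of_le hr0 hrM
      have habs : ∀ i, |a i| ≤ M := by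
        intro i
        by_cases h : |r| ≤ |a i|
        · exact hMmax _ ⟨h, Or.inl ⟨i, rfl⟩⟩
        · push_neg at h; linarith
      have hbabs : ∀ i, |b i| ≤ M := by
        intro i
        by_cases h : |r| ≤ |b i|
        · exact hMmax _ ⟨h, Or.inr ⟨i, rfl⟩⟩
        · push_neg at h; linarith
      set a' : ι → ℝ := fun i => if |a i| = M then 0 else a i with ha'def
      set b' : ι → ℝ := fun i => if |b i| = M then 0 else b i with hb'def
      have habs' : ∀ i, |a' i| ≤ |a i| := by
        intro i; by_cases h : |a i| = M <;> simp [ha'def, h, hM0.le]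
      have hbabs' : ∀ i, |b' i| ≤ |b i| := by
        intro i; by_cases h : |b i| = M <;> simp [hb'def, h, hM0.le]
      have ha' : Summable fun i => |a' i| ^ 5 :=
        ha.of_nonneg_of_le (fun i => by positivity)
          (fun i => pow_le_pow_left₀ (abs_nonneg _) (habs' i) 5)
      have hb' : Summable fun i => |b' i| ^ 5 :=
        hb.of_nonneg_of_le (fun i => by positivity)
          (fun i => pow_le_pow_left₀ (abs_nonneg _) (hbabs' i) 5)
      -- the strict sub-maximum bound
      have hGa : {i | M / 2 ≤ |a' i|}.Finite :=
        (finite_ge ha (by positivity : (0:ℝ) < M / 2)).subset fun i hi => le_trans hi (habs' i)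
      have hGb : {i | M / 2 ≤ |b' i|}.Finite :=
        (finite_ge hb (by positivity : (0:ℝ) < M / 2)).subset fun i hi => le_trans hi (hbabs' i)
      set T : Finset ℝ :=
        insert (M / 2) ((hGa.toFinset.image fun i => |a' i|) ∪ (hGb.toFinset.image fun i => |b' i|))
        with hTdef
      have hTne : T.Nonempty := Finset.insert_nonempty _ _
      set M' : ℝ := T.max' hTne with hM'def
      have hM'half : M / 2 ≤ M' := T.le_max' _ (Finset.mem_insert_self _ _)
      have hM'0 : 0 < M' := lt_of_lt_of_le (by positivity) hM'half
      have ha'lt : ∀ i, |a' i| < M := by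
        intro i
        by_cases h : |a i| = M
        · simpa [ha'def, h] using hM0
        · have : a' i = a i := by simp [ha'def, h]
          rw [this]; exact lt_of_le_of_ne (habs i) h
      have hb'lt : ∀ i, |b' i| < M := by
        intro i
        by_cases h : |b i| = M
        · simpa [hb'def, h] using hM0
        · have : b' i = b i := by simp [hb'def, h]
          rw [this]; exact lt_of_le_of_ne (hbabs i) h
      have hM'lt : M' < M := by
        rw [hM'def, Finset.max'_lt_iff]
        intro x hx
        rw [hTdef, Finset.mem_insert, Finset.mem_union] at hx
        rcases hx with h | h | h
        · rw [h]; linarith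
        · obtain ⟨i, _, hi⟩ := Finset.mem_image.mp h; rw [← hi]; exact ha'lt i
        · obtain ⟨i, _, hi⟩ := Finset.mem_image.mp h; rw [← hi]; exact hb'lt i
      have hbda : ∀ i, |a' i| ≤ M' := by
        intro i
        by_cases h : M / 2 ≤ |a' i|
        · refine T.le_max' _ ?_
          exact Finset.mem_insert_of_mem (Finset.mem_union_left _
            (Finset.mem_image.mpr ⟨i, by simpa using h, rfl⟩))
        · push_neg at h; linarith
      have hbdb : ∀ i, |b' i| ≤ M' := by
        intro i
        by_cases h : M / 2 ≤ |b' i|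
        · refine T.le_max' _ ?_
          exact Finset.mem_insert_of_mem (Finset.mem_union_right _
            (Finset.mem_image.mpr ⟨i, by simpa using h, rfl⟩))
        · push_neg at h; linarith
      -- counts and the key equation
      set AP := {i | a i = M}.ncard with hAP
      set AN := {i | a i = -M}.ncard with hAN
      set BP := {i | b i = M}.ncard with hBP
      set BN := {i | b i = -M}.ncard with hBN
      set x : ℝ := (AP : ℝ) - BP with hx
      set y : ℝ := (AN : ℝ) - BN with hy
      set Sa := ∑' i, |a' i| ^ 5 with hSa
      set Sb := ∑' i, |b' i| ^ 5 with hSb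
      have hSa0 : 0 ≤ Sa := tsum_nonneg fun i => by positivity
      have hSb0 : 0 ≤ Sb := tsum_nonneg fun i => by positivity
      have hEa : ∀ k : ℕ, 5 ≤ k →
          ∑' i, a i ^ k = (∑' i, a' i ^ k) + (AP : ℝ) * M ^ k + (AN : ℝ) * (-M) ^ k :=
        fun k hk => tsum_split ha hM0 hk
      have hEb : ∀ k : ℕ, 5 ≤ k →
          ∑' i, b i ^ k = (∑' i, b' i ^ k) + (BP : ℝ) * M ^ k + (BN : ℝ) * (-M) ^ k :=
        fun k hk => tsum_split hb hM0 hk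
      have hkey : ∀ k : ℕ, 5 ≤ k →
          x * M ^ k + y * (-M) ^ k = (∑' i, b' i ^ k) - ∑' i, a' i ^ k := by
        intro k hk
        have h := hpow k hk
        rw [hEa k hk, hEb k hk] at h
        rw [hx, hy]; linear_combination h
      have hbound : ∀ k : ℕ, 5 ≤ k →
          |x * M ^ k + y * (-M) ^ k| ≤ (Sa + Sb) * M' ^ (k - 5) := by
        intro k hk
        rw [hkey k hk]
        have h1 := tsum_pow_bound ha' hM'0.le hbda hk
        have h2 := tsum_pow_bound hb' hM'0.le hbdb hk
        rw [← hSa] at h1; rw [← hSb] at h2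
        calc |(∑' i, b' i ^ k) - ∑' i, a' i ^ k| ≤ |∑' i, b' i ^ k| + |∑' i, a' i ^ k| :=
              abs_sub _ _
          _ ≤ (Sa + Sb) * M' ^ (k - 5) := by rw [add_mul]; linarith
      -- translate into geometric bounds
      have hρ0 : (0:ℝ) ≤ M' / M := by positivity
      have hρ1 : M' / M < 1 := (div_lt_one hM0).mpr hM'lt
      have habstract : ∀ (c : ℝ) (k : ℕ), 5 ≤ k → |c| * M ^ k ≤ (Sa + Sb) * M' ^ (k - 5) →
          |c| ≤ (Sa + Sb) / M' ^ 5 * (M' / M) ^ k := by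
        intro c k hk hle
        have hM'5 : (0:ℝ) < M' ^ 5 := pow_pos hM'0 5
        have hsplit : M' ^ k = M' ^ (k - 5) * M' ^ 5 := by rw [← pow_add]; congr 1; omega
        rw [div_pow, div_mul_div_comm, le_div_iff₀ (by positivity)]
        calc |c| * (M' ^ 5 * M ^ k) = (|c| * M ^ k) * M' ^ 5 := by ring
          _ ≤ ((Sa + Sb) * M' ^ (k - 5)) * M' ^ 5 := mul_le_mul_of_nonneg_right hle hM'5.le
          _ = (Sa + Sb) * M' ^ k := by rw [hsplit]; ring
      have hxy1 : x + y = 0 := by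
        refine eq_zero_of_le_geom (C := (Sa + Sb) / M' ^ 5) hρ0 hρ1 fun m => ?_
        have hk : 5 ≤ 2 * m + 6 := by omega
        have heven : (-M) ^ (2 * m + 6) = M ^ (2 * m + 6) :=
          Even.neg_pow (by exact ⟨m + 3, by ring⟩) M
        have h := hbound (2 * m + 6) hk
        rw [heven, ← add_mul] at h
        rw [abs_mul, abs_of_pos (pow_pos hM0 _)] at h
        have h2 := habstract (x + y) (2 * m + 6) hk h
        refine h2.trans ?_
        refine mul_le_mul_of_nonneg_left ?_ (by positivity)
        exact pow_le_pow_of_le_one hρ0 hρ1.le (by omega)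
      have hxy2 : x - y = 0 := by
        refine eq_zero_of_le_geom (C := (Sa + Sb) / M' ^ 5) hρ0 hρ1 fun m => ?_
        have hk : 5 ≤ 2 * m + 5 := by omega
        have hodd : (-M) ^ (2 * m + 5) = -(M ^ (2 * m + 5)) :=
          Odd.neg_pow (by exact ⟨m + 2, by ring⟩) M
        have h := hbound (2 * m + 5) hk
        rw [hodd] at h
        have hrw : x * M ^ (2 * m + 5) + y * -(M ^ (2 * m + 5)) = (x - y) * M ^ (2 * m + 5) := by
          ring
        rw [hrw, abs_mul, abs_of_pos (pow_pos hM0 _)] at h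
        have h2 := habstract (x - y) (2 * m + 5) hk h
        refine h2.trans ?_
        refine mul_le_mul_of_nonneg_left ?_ (by positivity)
        exact pow_le_pow_of_le_one hρ0 hρ1.le (by omega)
      have hxe : x = 0 := by linarith
      have hye : y = 0 := by linarith
      have hAPBP : AP = BP := by
        have : (AP : ℝ) = BP := by rw [hx] at hxe; linarith
        exact_mod_cast this
      have hANBN : AN = BN := by
        have : (AN : ℝ) = BN := by rw [hy] at hye; linarith
        exact_mod_cast this
      -- now split on whether |r| = M
      rcases eq_or_lt_of_le hrM with heq | hlt
      · rcases (abs_eq hM0.le).mp heq.symm.symm with h1 | h1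
        · rw [h1]; exact hAPBP
        · rw [h1]; exact hANBN
      · -- strip the top level and use the induction hypothesis
        have hpow' : ∀ k : ℕ, 5 ≤ k → ∑' i, a' i ^ k = ∑' i, b' i ^ k := by
          intro k hk
          have h := hpow k hk
          rw [hEa k hk, hEb k hk, hAPBP, hANBN] at h
          linarith
        have hsa : {i | a' i = r} = {i | a i = r} := by
          ext i
          simp only [Set.mem_setOf_eq]
          constructor
          · intro h
            by_cases hm : |a i| = M
            · exfalso; apply hr; rw [← h]; simp [ha'def, hm]
            · simpa [ha'def, hm] using h
          · intro h
            have hm : |r| ≠ M := ne_of_lt hlt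
            simp [ha'def, h, hm]
        have hsb : {i | b' i = r} = {i | b i = r} := by
          ext i
          simp only [Set.mem_setOf_eq]
          constructor
          · intro h
            by_cases hm : |b i| = M
            · exfalso; apply hr; rw [← h]; simp [hb'def, hm]
            · simpa [hb'def, hm] using h
          · intro h
            have hm : |r| ≠ M := ne_of_lt hlt
            simp [hb'def, h, hm]
        have hVsub : {v : ℝ | |r| ≤ v ∧ ((∃ i, |a' i| = v) ∨ ∃ i, |b' i| = v)} ⊆ V \ {M} := by
          intro v hv
          obtain ⟨hvr, hv⟩ := hv
          have hv0 : 0 < v := lt_of_lt_of_le hr0 hvr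
          rcases hv with ⟨i, hi⟩ | ⟨i, hi⟩
          · by_cases hm : |a i| = M
            · exfalso; rw [ha'def] at hi; simp only [hm, if_pos] at hi
              rw [abs_zero] at hi; rw [← hi] at hv0; exact lt_irrefl _ hv0
            · have hai : a' i = a i := by simp [ha'def, hm]
              rw [hai] at hi
              refine ⟨⟨hvr, Or.inl ⟨i, hi⟩⟩, ?_⟩
              simp only [Set.mem_singleton_iff]
              rw [← hi]; exact hm
          · by_cases hm : |b i| = M
            · exfalso; rw [hb'def] at hi; simp only [hm, if_pos] at hi
              rw [abs_zero] at hi; rw [← hi] at hv0; exact lt_irrefl _ hv0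
            · have hbi : b' i = b i := by simp [hb'def, hm]
              rw [hbi] at hi
              refine ⟨⟨hvr, Or.inr ⟨i, hi⟩⟩, ?_⟩
              simp only [Set.mem_singleton_iff]
              rw [← hi]; exact hm
        have hcard' : {v : ℝ | |r| ≤ v ∧ ((∃ i, |a' i| = v) ∨ ∃ i, |b' i| = v)}.ncard ≤ n := by
          have h1 : {v : ℝ | |r| ≤ v ∧ ((∃ i, |a' i| = v) ∨ ∃ i, |b' i| = v)}.ncard
              ≤ (V \ {M}).ncard := Set.ncard_le_ncard hVsub hVfin.diff
          have h2 : (V \ {M}).ncard = V.ncard - 1 := Set.ncard_diff_singleton_of_mem hMV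
          have h3 : 0 < V.ncard := (Set.ncard_pos hVfin).mpr hVne
          omega
        rw [← hsa, ← hsb]
        exact ih a' b' ha' hb' hpow' hcard'

lemma summable_decay {B : ℝ} (hB : 0 < B) {a : ℤ → ℝ}
    (ha : ∀ j : ℤ, j ≠ 0 → |a j| ≤ (B / |(j : ℝ)|) ^ ((1 : ℝ) / 4)) :
    Summable fun i : {j : ℤ // j ≠ 0} => |a (i : ℤ)| ^ 5 := by
  have hsum : Summable fun n : ℤ => B ^ ((5 : ℝ)/4) * |(n : ℝ)| ^ (-((5 : ℝ)/4)) :=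
    (Real.summable_abs_int_rpow (by norm_num : (1:ℝ) < 5/4)).mul_left _
  have hsum2 : Summable fun i : {j : ℤ // j ≠ 0} =>
      B ^ ((5 : ℝ)/4) * |((i : ℤ) : ℝ)| ^ (-((5 : ℝ)/4)) :=
    hsum.comp_injective Subtype.val_injective
  refine hsum2.of_nonneg_of_le (fun i => by positivity) fun i => ?_
  have hj0 : ((i : ℤ) : ℝ) ≠ 0 := Int.cast_ne_zero.mpr i.prop
  have hja : (0:ℝ) < |((i : ℤ) : ℝ)| := abs_pos.mpr hj0
  calc |a (i : ℤ)| ^ 5 ≤ ((B / |((i : ℤ) : ℝ)|) ^ ((1 : ℝ) / 4)) ^ 5 :=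
        pow_le_pow_left₀ (abs_nonneg _) (ha _ i.prop) 5
    _ = (B / |((i : ℤ) : ℝ)|) ^ ((5 : ℝ)/4) := by
        rw [← Real.rpow_natCast ((B / |((i : ℤ) : ℝ)|) ^ ((1 : ℝ) / 4)) 5,
          ← Real.rpow_mul (by positivity)]
        norm_num
    _ = B ^ ((5 : ℝ)/4) * |((i : ℤ) : ℝ)| ^ (-((5 : ℝ)/4)) := by
        rw [div_eq_mul_inv, Real.mul_rpow hB.le (by positivity),
          Real.inv_rpow (abs_nonneg _), ← Real.rpow_neg (abs_nonneg _)]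


end Stmt4Aux

open Stmt4Aux

/-- if two real sequences indexed by `ℤ ∖ {0}` both satisfy the decay bound
`|a_j| ≤ (B/|j|)^(1/4)` and have equal `k`-th power sums for every `k ≥ 5`, then for every
`r ≠ 0` the index sets `{j : a_j = r}` and `{j : b_j = r}` are finite and have the same
cardinality. -/
theorem stmt_4 (B : ℝ) (hB : 0 < B) (a b : ℤ → ℝ)
    (ha : ∀ j : ℤ, j ≠ 0 → |a j| ≤ (B / |(j : ℝ)|) ^ ((1 : ℝ) / 4))
    (hb : ∀ j : ℤ, j ≠ 0 → |b j| ≤ (B / |(j : ℝ)|) ^ ((1 : ℝ) / 4))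
    (hpow : ∀ k : ℕ, 5 ≤ k →
      ∑' j : {j : ℤ // j ≠ 0}, a (j : ℤ) ^ k = ∑' j : {j : ℤ // j ≠ 0}, b (j : ℤ) ^ k) :
    ∀ r : ℝ, r ≠ 0 →
      {j : ℤ | j ≠ 0 ∧ a j = r}.Finite ∧ {j : ℤ | j ≠ 0 ∧ b j = r}.Finite ∧
        {j : ℤ | j ≠ 0 ∧ a j = r}.ncard = {j : ℤ | j ≠ 0 ∧ b j = r}.ncard := by
  intro r hr
  set A : {j : ℤ // j ≠ 0} → ℝ := fun i => a (i : ℤ) with hA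
  set C : {j : ℤ // j ≠ 0} → ℝ := fun i => b (i : ℤ) with hC
  have hsa : Summable fun i => |A i| ^ 5 := summable_decay hB ha
  have hsb : Summable fun i => |C i| ^ 5 := summable_decay hB hb
  have hr0 : (0:ℝ) < |r| := abs_pos.mpr hr
  have hfinA : {i : {j : ℤ // j ≠ 0} | A i = r}.Finite :=
    (finite_ge hsa hr0).subset fun i hi => by
      simp only [Set.mem_setOf_eq] at *; rw [hi]
  have hfinC : {i : {j : ℤ // j ≠ 0} | C i = r}.Finite :=
    (finite_ge hsb hr0).subset fun i hi => by
      simp only [Set.mem_setOf_eq] at *; rw [hi]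
  have himA : Subtype.val '' {i : {j : ℤ // j ≠ 0} | A i = r} = {j : ℤ | j ≠ 0 ∧ a j = r} := by
    ext j
    simp only [Set.mem_image, Set.mem_setOf_eq]
    constructor
    · rintro ⟨⟨j', hj'⟩, h1, rfl⟩; exact ⟨hj', h1⟩
    · rintro ⟨h1, h2⟩; exact ⟨⟨j, h1⟩, h2, rfl⟩
  have himC : Subtype.val '' {i : {j : ℤ // j ≠ 0} | C i = r} = {j : ℤ | j ≠ 0 ∧ b j = r} := by
    ext j
    simp only [Set.mem_image, Set.mem_setOf_eq]
    constructor
    · rintro ⟨⟨j', hj'⟩, h1, rfl⟩; exact ⟨hj', h1⟩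
    · rintro ⟨h1, h2⟩; exact ⟨⟨j, h1⟩, h2, rfl⟩
  refine ⟨himA ▸ hfinA.image _, himC ▸ hfinC.image _, ?_⟩
  rw [← himA, ← himC, Set.ncard_image_of_injective _ Subtype.val_injective,
    Set.ncard_image_of_injective _ Subtype.val_injective]
  exact key _ A C hsa hsb hpow r hr (le_refl _)
end

section
/- Let H be a separable real Hilbert space, let T_n and T be compact self-adjoint bounded linear operators on H with ‖T_n − T‖ → 0 in operator norm, and let σ ≠ 0 be a simple eigenvalue of T (its eigenspace is one-dimensional) with unit eigenvector φ. Then there exists N such that for all n ≥ N the operator T_n has a unit eigenvector φ_n with eigenvalue λ_n, satisfying λ_n → σ and min(‖φ_n − φ‖, ‖φ_n + φ‖) → 0 as n → ∞; that is, for a suitable choice of signs the eigenvectors φ_n converge in norm to φ. -/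
open Filter

local notation "⟪" x ", " y "⟫" => @inner ℝ _ _ x y

/-- L1: compactness extraction of an eigenvector from an approximate eigenvector sequence. -/
lemma approx_eig {H : Type*} [NormedAddCommGroup H] [InnerProductSpace ℝ H]
    (S : H →L[ℝ] H) (hS : IsCompactOperator S) {μ : ℝ} (hμ : μ ≠ 0)
    (x : ℕ → H) (hx : ∀ k, ‖x k‖ = 1)
    (hc : Tendsto (fun k => S (x k) - μ • x k) atTop (nhds 0)) :
    ∃ z : H, ‖z‖ = 1 ∧ S z = μ • z ∧
      ∃ ψ : ℕ → ℕ, StrictMono ψ ∧ Tendsto (x ∘ ψ) atTop (nhds z) := by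
  have hS' : IsCompactOperator ((S : H →ₗ[ℝ] H) : H → H) := hS
  have hK : IsCompact (closure ((S : H →ₗ[ℝ] H) '' Metric.closedBall 0 1)) :=
    hS'.isCompact_closure_image_closedBall (𝕜₁ := ℝ) 1
  have hmem : ∀ k, S (x k) ∈ closure ((S : H →ₗ[ℝ] H) '' Metric.closedBall 0 1) := by
    intro k
    exact subset_closure ⟨x k, by simp [hx k], rfl⟩
  obtain ⟨y, -, ψ, hψ, hy⟩ := hK.tendsto_subseq hmem
  set z : H := μ⁻¹ • y with hz
  have hxz : Tendsto (x ∘ ψ) atTop (nhds z) := by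
    have h1 : Tendsto (fun j => μ⁻¹ • (S (x (ψ j)) - (S (x (ψ j)) - μ • x (ψ j))))
        atTop (nhds (μ⁻¹ • (y - 0))) :=
      ((hy.sub (hc.comp hψ.tendsto_atTop)).const_smul μ⁻¹)
    have h2 : (fun j => μ⁻¹ • (S (x (ψ j)) - (S (x (ψ j)) - μ • x (ψ j)))) = x ∘ ψ := by
      funext j
      simp [smul_smul, inv_mul_cancel₀ hμ]
    rw [h2] at h1
    simpa using h1
  have hznorm : ‖z‖ = 1 := by
    have h3 : Tendsto (fun j => ‖(x ∘ ψ) j‖) atTop (nhds ‖z‖) := hxz.norm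
    have h4 : (fun j => ‖(x ∘ ψ) j‖) = fun _ => (1 : ℝ) := by funext j; exact hx (ψ j)
    rw [h4] at h3
    exact (tendsto_nhds_unique tendsto_const_nhds h3).symm
  have hSz : S z = μ • z := by
    have h5 : Tendsto (fun j => S ((x ∘ ψ) j)) atTop (nhds (S z)) :=
      (S.continuous.tendsto z).comp hxz
    have h6 : Tendsto (fun j => S ((x ∘ ψ) j)) atTop (nhds y) := hy
    have := tendsto_nhds_unique h5 h6
    rw [this, hz, smul_smul, mul_inv_cancel₀ hμ, one_smul]
  exact ⟨z, hznorm, hSz, ψ, hψ, hxz⟩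

/-- generalized Cauchy-Schwarz for a positive symmetric operator. -/
lemma pos_cs {H : Type*} [NormedAddCommGroup H] [InnerProductSpace ℝ H]
    (B : H →L[ℝ] H) (hsym : ∀ x y : H, ⟪B x, y⟫ = ⟪x, B y⟫)
    (hpos : ∀ x : H, (0:ℝ) ≤ ⟪B x, x⟫) (x : H) :
    ‖B x‖ ^ 2 ≤ ‖B‖ * ⟪B x, x⟫ := by
  have key : ∀ u v : H, ⟪B u, v⟫ ^ 2 ≤ ⟪B u, u⟫ * ⟪B v, v⟫ := by
    intro u v
    have hq : ∀ t : ℝ, 0 ≤ ⟪B v, v⟫ * (t * t) + (2 * ⟪B u, v⟫) * t + ⟪B u, u⟫ := by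
      intro t
      have h0 := hpos (u + t • v)
      have hvu : ⟪B v, u⟫ = ⟪B u, v⟫ := by
        rw [hsym v u, real_inner_comm]
      have hexp : ⟪B (u + t • v), u + t • v⟫ =
          ⟪B v, v⟫ * (t * t) + (2 * ⟪B u, v⟫) * t + ⟪B u, u⟫ := by
        simp only [map_add, map_smul, inner_add_left, inner_add_right,
          real_inner_smul_left, real_inner_smul_right, hvu]
        ring
      linarith [hexp ▸ h0]
    have hd := discrim_le_zero hq
    rw [discrim] at hd
    nlinarith [hd]
  have h1 := key x (B x)
  have h2 : ⟪B (B x), B x⟫ ≤ ‖B‖ * ‖B x‖ ^ 2 := by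
    calc ⟪B (B x), B x⟫ ≤ ‖B (B x)‖ * ‖B x‖ := real_inner_le_norm _ _
    _ ≤ (‖B‖ * ‖B x‖) * ‖B x‖ :=
        mul_le_mul_of_nonneg_right (B.le_opNorm (B x)) (norm_nonneg _)
    _ = ‖B‖ * ‖B x‖ ^ 2 := by ring
  have h3 : ⟪B x, B x⟫ = ‖B x‖ ^ 2 := real_inner_self_eq_norm_sq (B x)
  rcases eq_or_lt_of_le (norm_nonneg (B x)) with h4 | h4
  · rw [← h4]
    have := mul_nonneg (norm_nonneg B) (hpos x)
    simpa using this
  · have h5 : ‖B x‖ ^ 2 * ‖B x‖ ^ 2 ≤ (‖B‖ * ⟪B x, x⟫) * ‖B x‖ ^ 2 := by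
      nlinarith [h1, h2, h3, hpos x]
    have h6 : (0:ℝ) < ‖B x‖ ^ 2 := by positivity
    exact le_of_mul_le_mul_right h5 h6

/-- existence of an eigenvalue near an approximate eigenvalue, for compact self-adjoint. -/
lemma exists_eig {H : Type*} [NormedAddCommGroup H] [InnerProductSpace ℝ H]
    [CompleteSpace H] (S : H →L[ℝ] H) (hsa : IsSelfAdjoint S) (hcpt : IsCompactOperator S)
    (σ : ℝ) (φ : H) (hφ : ‖φ‖ = 1)
    (ε : ℝ) (hεσ : ε < |σ|) (hSφ : ‖S φ - σ • φ‖ ≤ ε) :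
    ∃ (x : H) (lam : ℝ), ‖x‖ = 1 ∧ S x = lam • x ∧ |lam - σ| ≤ ε := by
  have hε0 : 0 ≤ ε := le_trans (norm_nonneg _) hSφ
  have hε2 : ε ^ 2 < σ ^ 2 := by nlinarith [abs_nonneg σ, sq_abs σ]
  have hSsym : ∀ x y : H, ⟪S x, y⟫ = ⟪x, S y⟫ := fun x y => hsa.isSymmetric x y
  set K : H →L[ℝ] H := (2 * σ) • S - S.comp S with hK
  have hKapp : ∀ u : H, K u = (2 * σ) • S u - S (S u) := by
    intro u; simp [hK]
  have hKsym : ∀ x y : H, ⟪K x, y⟫ = ⟪x, K y⟫ := by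
    intro x y
    simp only [hKapp, inner_sub_left, inner_sub_right, real_inner_smul_left,
      real_inner_smul_right]
    rw [hSsym x y, hSsym (S x) y, hSsym x (S y)]
  have hid : ∀ u : H, ⟪K u, u⟫ = σ ^ 2 * ‖u‖ ^ 2 - ‖S u - σ • u‖ ^ 2 := by
    intro u
    have h1 : ‖S u - σ • u‖ ^ 2 = ‖S u‖ ^ 2 - 2 * ⟪S u, σ • u⟫ + ‖σ • u‖ ^ 2 :=
      norm_sub_sq_real _ _
    have h2 : ⟪S (S u), u⟫ = ‖S u‖ ^ 2 := by
      rw [hSsym (S u) u]; exact real_inner_self_eq_norm_sq (S u)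
    have h3 : ‖σ • u‖ ^ 2 = σ ^ 2 * ‖u‖ ^ 2 := by
      rw [norm_smul]; simp [mul_pow, sq_abs]
    rw [hKapp, inner_sub_left, real_inner_smul_left, h2, h1, h3,
      real_inner_smul_right]
    ring
  -- the sup of the Rayleigh quotient of K
  set A : Set ℝ := (fun u : H => ⟪K u, u⟫) '' {u : H | ‖u‖ = 1} with hA
  have hAne : A.Nonempty := ⟨_, ⟨φ, hφ, rfl⟩⟩
  have hAbdd : BddAbove A := by
    refine ⟨‖K‖, ?_⟩
    rintro r ⟨u, hu, rfl⟩
    calc ⟪K u, u⟫ ≤ ‖K u‖ * ‖u‖ := real_inner_le_norm _ _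
    _ ≤ (‖K‖ * ‖u‖) * ‖u‖ := mul_le_mul_of_nonneg_right (K.le_opNorm u) (norm_nonneg _)
    _ = ‖K‖ := by rw [hu]; ring
  set M : ℝ := sSup A with hM
  have hMle : M ≤ σ ^ 2 := by
    apply csSup_le hAne
    rintro r ⟨u, hu, rfl⟩
    dsimp only
    rw [hid u, Set.mem_setOf_eq.mp hu]
    nlinarith [sq_nonneg ‖S u - σ • u‖]
  have hMge : σ ^ 2 - ε ^ 2 ≤ M := by
    have h1 : ⟪K φ, φ⟫ ∈ A := ⟨φ, hφ, rfl⟩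
    have h2 : σ ^ 2 - ε ^ 2 ≤ ⟪K φ, φ⟫ := by
      rw [hid φ, hφ]
      have : ‖S φ - σ • φ‖ ^ 2 ≤ ε ^ 2 := by nlinarith [norm_nonneg (S φ - σ • φ)]
      nlinarith
    exact le_trans h2 (le_csSup hAbdd h1)
  have hMpos : 0 < M := by nlinarith
  -- the positive operator B = M - K
  set B : H →L[ℝ] H := M • ContinuousLinearMap.id ℝ H - K with hB
  have hBapp : ∀ u : H, B u = M • u - K u := by intro u; simp [hB]
  have hBsym : ∀ x y : H, ⟪B x, y⟫ = ⟪x, B y⟫ := by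
    intro x y
    simp only [hBapp, inner_sub_left, inner_sub_right, real_inner_smul_left,
      real_inner_smul_right, hKsym x y]
  have hBpos : ∀ u : H, (0:ℝ) ≤ ⟪B u, u⟫ := by
    intro u
    have hKu : ⟪K u, u⟫ ≤ M * ‖u‖ ^ 2 := by
      rcases eq_or_ne u 0 with rfl | hu
      · simp
      · set v : H := ‖u‖⁻¹ • u with hv
        have hvnorm : ‖v‖ = 1 := norm_smul_inv_norm hu
        have hKv : ⟪K v, v⟫ ≤ M := le_csSup hAbdd ⟨v, hvnorm, rfl⟩
        have hscale : ⟪K v, v⟫ = (‖u‖⁻¹)^2 * ⟪K u, u⟫ := by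
          rw [hv, map_smul, real_inner_smul_left, real_inner_smul_right]
          ring
        have hu0 : (0:ℝ) < ‖u‖ := norm_pos_iff.mpr hu
        rw [hscale] at hKv
        have := mul_le_mul_of_nonneg_left hKv (le_of_lt (by positivity : (0:ℝ) < ‖u‖^2))
        calc ⟪K u, u⟫ = ‖u‖^2 * ((‖u‖⁻¹)^2 * ⟪K u, u⟫) := by
              field_simp
        _ ≤ ‖u‖^2 * M := this
        _ = M * ‖u‖^2 := by ring
    have : ⟪B u, u⟫ = M * ‖u‖ ^ 2 - ⟪K u, u⟫ := by
      rw [hBapp, inner_sub_left, real_inner_smul_left, real_inner_self_eq_norm_sq]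
    linarith [this]
  -- maximizing sequence
  have hseq : ∀ k : ℕ, ∃ u : H, ‖u‖ = 1 ∧ M - 1 / (k + 1) < ⟪K u, u⟫ := by
    intro k
    have hlt : M - 1 / ((k:ℝ) + 1) < M := by
      have : (0:ℝ) < 1 / ((k:ℝ) + 1) := by positivity
      linarith
    obtain ⟨a, ⟨u, hu, rfl⟩, ha⟩ := exists_lt_of_lt_csSup hAne hlt
    exact ⟨u, hu, ha⟩
  choose x hx1 hx2 using hseq
  have hBx : Tendsto (fun k => ‖B (x k)‖) atTop (nhds 0) := by
    have hb : ∀ k : ℕ, ‖B (x k)‖ ≤ Real.sqrt (‖B‖ * (1 / (k + 1))) := by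
      intro k
      rw [Real.le_sqrt (norm_nonneg _) (by positivity)]
      have h1 : ‖B (x k)‖ ^ 2 ≤ ‖B‖ * ⟪B (x k), x k⟫ := pos_cs B hBsym hBpos (x k)
      have h2 : ⟪B (x k), x k⟫ = M * ‖x k‖ ^ 2 - ⟪K (x k), x k⟫ := by
        rw [hBapp, inner_sub_left, real_inner_smul_left, real_inner_self_eq_norm_sq]
      have h3 : ⟪B (x k), x k⟫ ≤ 1 / (k + 1) := by
        rw [h2, hx1 k]
        have := hx2 k
        nlinarith
      nlinarith [norm_nonneg B, hBpos (x k), h1]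
    have hlim : Tendsto (fun k : ℕ => Real.sqrt (‖B‖ * (1 / (k + 1)))) atTop (nhds 0) := by
      have h4 : Tendsto (fun k : ℕ => ‖B‖ * (1 / ((k:ℝ) + 1))) atTop (nhds 0) := by
        simpa using tendsto_const_nhds.mul (tendsto_one_div_add_atTop_nhds_zero_nat (𝕜 := ℝ))
      simpa using h4.sqrt
    exact squeeze_zero (fun k => norm_nonneg _) hb hlim
  have hKcpt : IsCompactOperator (⇑K) := by
    have h1 : IsCompactOperator ((2 * σ) • (⇑S)) := hcpt.smul (2 * σ)
    have h2 : IsCompactOperator ((⇑S) ∘ (⇑S)) := hcpt.comp_clm S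
    have h3 := h1.sub h2
    have : ⇑K = (2 * σ) • (⇑S) - (⇑S) ∘ (⇑S) := by
      funext u; simp [hKapp u]
    rwa [this]
  have hcv : Tendsto (fun k => K (x k) - M • x k) atTop (nhds 0) := by
    rw [tendsto_zero_iff_norm_tendsto_zero]
    have : ∀ k, ‖K (x k) - M • x k‖ = ‖B (x k)‖ := by
      intro k
      rw [hBapp, ← norm_neg]
      congr 1
      abel
    simpa [this] using hBx
  obtain ⟨z, hznorm, hKz, -⟩ := approx_eig K hKcpt (ne_of_gt hMpos) x hx1 hcv
  -- now extract an eigenvector of S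
  have hstar : S (S z) = (2 * σ) • S z - M • z := by
    have := hKapp z
    rw [hKz] at this
    have h := this.symm
    rw [sub_eq_iff_eq_add] at h
    rw [h]; abel
  have hMm : σ ^ 2 - M ≤ ε ^ 2 := by linarith
  have hMm0 : 0 ≤ σ ^ 2 - M := by linarith
  set m : ℝ := Real.sqrt (σ ^ 2 - M) with hm
  have hm0 : 0 ≤ m := Real.sqrt_nonneg _
  have hm2 : m ^ 2 = σ ^ 2 - M := Real.sq_sqrt hMm0
  have hmε : m ≤ ε := by
    rw [hm, show ε = Real.sqrt (ε ^ 2) from (Real.sqrt_sq hε0).symm]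
    exact Real.sqrt_le_sqrt hMm
  set w : H := S z - σ • z + m • z with hw
  rcases eq_or_ne w 0 with hw0 | hw0
  · refine ⟨z, σ - m, hznorm, ?_, ?_⟩
    · rw [hw] at hw0
      have h' : S z - (σ • z - m • z) = 0 := by
        rw [show S z - (σ • z - m • z) = S z - σ • z + m • z from by abel]
        exact hw0
      rw [eq_of_sub_eq_zero h', sub_smul]
    · rw [show σ - m - σ = -m by ring, abs_neg, abs_of_nonneg hm0]
      exact hmε
  · have hSw : S w = (σ + m) • w := by
      rw [hw]
      simp only [map_add, map_sub, map_smul, hstar]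
      have hM' : M = σ ^ 2 - m ^ 2 := by linarith [hm2]
      rw [hM']
      module
    refine ⟨‖w‖⁻¹ • w, σ + m, norm_smul_inv_norm hw0, ?_, ?_⟩
    · rw [map_smul, hSw, smul_comm]
    · rw [show σ + m - σ = m by ring, abs_of_nonneg hm0]
      exact hmε

lemma gap_lemma {H : Type*} [NormedAddCommGroup H] [InnerProductSpace ℝ H]
    (T : H →L[ℝ] H) (hTcpt : IsCompactOperator T) (σ : ℝ) (hσ : σ ≠ 0)
    (φ : H) (hφnorm : ‖φ‖ = 1)
    (hsimple : ∀ x : H, T x = σ • x → ∃ c : ℝ, x = c • φ) :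
    ∃ δ : ℝ, 0 < δ ∧ ∀ w : H, ⟪w, φ⟫ = 0 → δ * ‖w‖ ≤ ‖T w - σ • w‖ := by
  by_contra hcon
  push_neg at hcon
  have hseq : ∀ k : ℕ, ∃ u : H, ‖u‖ = 1 ∧ ⟪u, φ⟫ = 0 ∧ ‖T u - σ • u‖ < 1 / (k + 1) := by
    intro k
    obtain ⟨w, hw1, hw2⟩ := hcon (1 / ((k:ℝ) + 1)) (by positivity)
    have hwne : w ≠ 0 := by
      rintro rfl
      simp at hw2
    have hwpos : (0:ℝ) < ‖w‖ := norm_pos_iff.mpr hwne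
    refine ⟨‖w‖⁻¹ • w, norm_smul_inv_norm hwne, ?_, ?_⟩
    · rw [real_inner_smul_left, hw1, mul_zero]
    · have h1 : T (‖w‖⁻¹ • w) - σ • (‖w‖⁻¹ • w) = ‖w‖⁻¹ • (T w - σ • w) := by
        rw [map_smul, smul_sub, smul_comm]
      rw [h1, norm_smul, Real.norm_eq_abs, abs_of_pos (by positivity)]
      calc ‖w‖⁻¹ * ‖T w - σ • w‖ < ‖w‖⁻¹ * (1 / ((k:ℝ) + 1) * ‖w‖) := by
            exact mul_lt_mul_of_pos_left hw2 (by positivity)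
      _ = 1 / ((k:ℝ) + 1) := by field_simp
  choose x hx1 hx2 hx3 using hseq
  have hcv : Tendsto (fun k => T (x k) - σ • x k) atTop (nhds 0) := by
    rw [tendsto_zero_iff_norm_tendsto_zero]
    exact squeeze_zero (fun k => norm_nonneg _) (fun k => le_of_lt (hx3 k))
      tendsto_one_div_add_atTop_nhds_zero_nat
  obtain ⟨z, hz1, hz2, ψ, hψ, hzconv⟩ := approx_eig T hTcpt hσ x hx1 hcv
  have hzφ : ⟪z, φ⟫ = 0 := by
    have h1 : Tendsto (fun j => ⟪(x ∘ ψ) j, φ⟫) atTop (nhds ⟪z, φ⟫) :=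
      hzconv.inner tendsto_const_nhds
    have h2 : (fun j => ⟪(x ∘ ψ) j, φ⟫) = fun _ => (0:ℝ) := by
      funext j; exact hx2 (ψ j)
    rw [h2] at h1
    exact (tendsto_nhds_unique tendsto_const_nhds h1).symm
  obtain ⟨c, hc⟩ := hsimple z hz2
  have hc0 : c = 0 := by
    have := hzφ
    rw [hc, real_inner_smul_left, real_inner_self_eq_norm_sq, hφnorm] at this
    simpa using this
  rw [hc0, zero_smul] at hc
  rw [hc] at hz1
  simp at hz1

/-- if compact self-adjoint operators `T_n` converge in operator norm to a compact
self-adjoint operator `T` with a simple nonzero eigenvalue `σ` and unit eigenvector `φ`, then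
eventually each `T_n` has a unit eigenvector `φ_n` whose eigenvalue `λ_n` tends to `σ`, and
`min(‖φ_n − φ‖, ‖φ_n + φ‖) → 0`. -/
theorem stmt_7 {H : Type*} [NormedAddCommGroup H] [InnerProductSpace ℝ H]
    [CompleteSpace H] [TopologicalSpace.SeparableSpace H]
    (T : H →L[ℝ] H) (hTsa : IsSelfAdjoint T) (hTcpt : IsCompactOperator T)
    (Tn : ℕ → H →L[ℝ] H)
    (hTnsa : ∀ n, IsSelfAdjoint (Tn n)) (hTncpt : ∀ n, IsCompactOperator (Tn n))
    (hconv : Tendsto (fun n => ‖Tn n - T‖) atTop (nhds 0))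
    (σ : ℝ) (hσ : σ ≠ 0) (φ : H) (hφnorm : ‖φ‖ = 1) (hφeig : T φ = σ • φ)
    (hsimple : ∀ x : H, T x = σ • x → ∃ c : ℝ, x = c • φ) :
    ∃ (N : ℕ) (φn : ℕ → H) (lam : ℕ → ℝ),
      (∀ n, N ≤ n → ‖φn n‖ = 1 ∧ Tn n (φn n) = lam n • φn n) ∧
      Tendsto lam atTop (nhds σ) ∧
      Tendsto (fun n => min ‖φn n - φ‖ ‖φn n + φ‖) atTop (nhds 0) := by
  classical
  obtain ⟨δ, hδpos, hgap⟩ := gap_lemma T hTcpt σ hσ φ hφnorm hsimple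
  set ε : ℕ → ℝ := fun n => ‖Tn n - T‖ with hε
  set P : ℕ → Prop := fun n => ∃ (x : H) (l : ℝ),
    ‖x‖ = 1 ∧ Tn n x = l • x ∧ |l - σ| ≤ ε n with hPdef
  have hP : ∀ n, ε n < |σ| → P n := by
    intro n hn
    have hb : ‖Tn n φ - σ • φ‖ ≤ ε n := by
      have h1 : Tn n φ - σ • φ = (Tn n - T) φ := by
        rw [← hφeig]; simp
      rw [h1]
      calc ‖(Tn n - T) φ‖ ≤ ‖Tn n - T‖ * ‖φ‖ := (Tn n - T).le_opNorm φ
      _ = ε n := by rw [hφnorm, mul_one]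
    exact exists_eig (Tn n) (hTnsa n) (hTncpt n) σ φ hφnorm (ε n) hn hb
  have hev : ∀ᶠ n in atTop, ε n < |σ| :=
    hconv.eventually_lt_const (abs_pos.mpr hσ)
  obtain ⟨N, hN⟩ := eventually_atTop.mp hev
  let φn : ℕ → H := fun n => if h : P n then h.choose else φ
  let lam : ℕ → ℝ := fun n => if h : P n then h.choose_spec.choose else σ
  have hspec : ∀ n, P n →
      ‖φn n‖ = 1 ∧ Tn n (φn n) = lam n • φn n ∧ |lam n - σ| ≤ ε n := by
    intro n h
    simp only [φn, lam, dif_pos h]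
    exact ⟨h.choose_spec.choose_spec.1, h.choose_spec.choose_spec.2.1,
      h.choose_spec.choose_spec.2.2⟩
  have hPn : ∀ n, N ≤ n → P n := fun n hn => hP n (hN n hn)
  refine ⟨N, φn, lam, ?_, ?_, ?_⟩
  · intro n hn
    exact ⟨(hspec n (hPn n hn)).1, (hspec n (hPn n hn)).2.1⟩
  · have h1 : Tendsto (fun n => lam n - σ) atTop (nhds 0) := by
      refine squeeze_zero_norm' ?_ hconv
      refine eventually_atTop.mpr ⟨N, fun n hn => ?_⟩
      rw [Real.norm_eq_abs]
      exact (hspec n (hPn n hn)).2.2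
    have h2 := h1.add_const σ
    rw [zero_add] at h2
    have h3 : (fun n => lam n - σ + σ) = lam := by funext n; ring
    rwa [h3] at h2
  · -- eigenvector convergence
    have key : ∀ n, N ≤ n → min ‖φn n - φ‖ ‖φn n + φ‖ ≤ Real.sqrt 2 * (2 / δ * ε n) := by
      intro n hn
      obtain ⟨h1, h2, h3⟩ := hspec n (hPn n hn)
      set c : ℝ := ⟪φn n, φ⟫ with hc
      set w : H := φn n - c • φ with hw
      have hwφ : ⟪w, φ⟫ = 0 := by
        rw [hw, inner_sub_left, real_inner_smul_left, real_inner_self_eq_norm_sq,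
          hφnorm]
        ring
      have hεnn : 0 ≤ ε n := norm_nonneg _
      -- ‖T φn - σ φn‖ ≤ 2 ε n
      have hnorm1 : ‖T (φn n) - σ • φn n‖ ≤ 2 * ε n := by
        have hdec : T (φn n) - σ • φn n = (T - Tn n) (φn n) + (lam n - σ) • φn n := by
          simp [h2, sub_smul]
        rw [hdec]
        calc ‖(T - Tn n) (φn n) + (lam n - σ) • φn n‖
            ≤ ‖(T - Tn n) (φn n)‖ + ‖(lam n - σ) • φn n‖ := norm_add_le _ _
        _ ≤ ‖T - Tn n‖ * ‖φn n‖ + |lam n - σ| * ‖φn n‖ := by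
            gcongr
            · exact (T - Tn n).le_opNorm _
            · rw [norm_smul, Real.norm_eq_abs]
        _ = ‖Tn n - T‖ + |lam n - σ| := by rw [h1, ← norm_neg (T - Tn n), neg_sub]; ring
        _ ≤ 2 * ε n := by rw [hε] at h3 ⊢; linarith
      -- gap estimate gives ‖w‖ small
      have hTw : T w - σ • w = T (φn n) - σ • φn n := by
        rw [hw, map_sub, map_smul, hφeig, smul_sub, smul_comm σ c φ]
        abel
      have hwbound : ‖w‖ ≤ 2 / δ * ε n := by
        have := hgap w hwφ
        rw [hTw] at this
        have h4 : δ * ‖w‖ ≤ 2 * ε n := le_trans this hnorm1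
        rw [div_mul_eq_mul_div, le_div_iff₀ hδpos]
        linarith [h4]
      -- Pythagoras
      have hpyth : 1 = c ^ 2 + ‖w‖ ^ 2 := by
        have hdec : φn n = c • φ + w := by rw [hw]; abel
        have h5 : ‖c • φ + w‖ ^ 2 = ‖c • φ‖ ^ 2 + 2 * ⟪c • φ, w⟫ + ‖w‖ ^ 2 :=
          norm_add_sq_real _ _
        have h6 : ⟪c • φ, w⟫ = 0 := by
          rw [real_inner_smul_left, real_inner_comm, hwφ, mul_zero]
        have h7 : ‖c • φ‖ ^ 2 = c ^ 2 := by
          rw [norm_smul, Real.norm_eq_abs, hφnorm, mul_one, sq_abs]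
        rw [← hdec, h1] at h5
        rw [h6, h7] at h5
        simpa using h5
      have hc1 : c ^ 2 ≤ 1 := by nlinarith [sq_nonneg ‖w‖]
      have hminnn : 0 ≤ min ‖φn n - φ‖ ‖φn n + φ‖ :=
        le_min (norm_nonneg _) (norm_nonneg _)
      -- one of the two distances is small
      have hmin : (min ‖φn n - φ‖ ‖φn n + φ‖) ^ 2 ≤ 2 * ‖w‖ ^ 2 := by
        rcases le_or_gt 0 c with hcpos | hcneg
        · have hle : c ≤ 1 := by nlinarith
          have h8 : ‖φn n - φ‖ ^ 2 = 2 - 2 * c := by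
            rw [norm_sub_sq_real, h1, hφnorm, ← hc]; ring
          have h10 : (min ‖φn n - φ‖ ‖φn n + φ‖) ^ 2 ≤ ‖φn n - φ‖ ^ 2 :=
            pow_le_pow_left₀ hminnn (min_le_left _ _) 2
          nlinarith
        · have hle : -1 ≤ c := by nlinarith
          have h8 : ‖φn n + φ‖ ^ 2 = 2 + 2 * c := by
            rw [norm_add_sq_real, h1, hφnorm, ← hc]; ring
          have h10 : (min ‖φn n - φ‖ ‖φn n + φ‖) ^ 2 ≤ ‖φn n + φ‖ ^ 2 :=
            pow_le_pow_left₀ hminnn (min_le_right _ _) 2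
          nlinarith
      -- take square roots
      have hs : min ‖φn n - φ‖ ‖φn n + φ‖ ≤ Real.sqrt 2 * ‖w‖ := by
        have h11 : Real.sqrt ((min ‖φn n - φ‖ ‖φn n + φ‖) ^ 2) ≤
            Real.sqrt (2 * ‖w‖ ^ 2) := Real.sqrt_le_sqrt hmin
        rw [Real.sqrt_sq hminnn] at h11
        have h12 : Real.sqrt (2 * ‖w‖ ^ 2) = Real.sqrt 2 * ‖w‖ := by
          rw [Real.sqrt_mul (by norm_num : (0:ℝ) ≤ 2), Real.sqrt_sq (norm_nonneg _)]
        rw [h12] at h11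
        exact h11
      calc min ‖φn n - φ‖ ‖φn n + φ‖ ≤ Real.sqrt 2 * ‖w‖ := hs
      _ ≤ Real.sqrt 2 * (2 / δ * ε n) := by
          exact mul_le_mul_of_nonneg_left hwbound (Real.sqrt_nonneg 2)
    apply squeeze_zero'
    · exact Eventually.of_forall fun n => le_min (norm_nonneg _) (norm_nonneg _)
    · exact eventually_atTop.mpr ⟨N, key⟩
    · have : Tendsto (fun n => Real.sqrt 2 * (2 / δ * ε n)) atTop (nhds 0) := by
        have := (tendsto_const_nhds (x := Real.sqrt 2 * (2 / δ))).mul hconv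
        simpa [mul_assoc] using this
      exact this
end

section
/- Let H be a separable real Hilbert space, let T_n and T be compact self-adjoint bounded linear operators on H with ‖T_n − T‖ → 0 in operator norm, and let c > 0 be such that no eigenvalue of T has absolute value exactly c. Let E ⊆ H be the closed linear span of all eigenvectors of T whose eigenvalue λ satisfies |λ| < c (including the kernel of T), and let P_E be the orthogonal projection onto E. If for each n, φ_n is a unit eigenvector of T_n whose eigenvalue λ_n satisfies |λ_n| < c, then ‖φ_n − P_E φ_n‖ → 0 as n → ∞; that is, the distance from φ_n to the subspace E tends to zero. -/
open Filter

variable {H : Type*} [NormedAddCommGroup H] [InnerProductSpace ℝ H] [CompleteSpace H]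

/-- The closed linear span of all eigenvectors of `T` whose eigenvalue lies in `γ`
(the eigenspace of `0`, i.e. the kernel, is included whenever `0 ∈ γ`). -/
noncomputable def eigSpan (T : H →L[ℝ] H) (γ : Set ℝ) : Submodule ℝ H :=
  (⨆ r ∈ γ, Module.End.eigenspace (T : H →ₗ[ℝ] H) r).topologicalClosure

/-- The orthogonal projection of `H` onto `eigSpan T γ`, as an operator `H →L[ℝ] H`. -/
noncomputable def specProj (T : H →L[ℝ] H) (γ : Set ℝ) : H →L[ℝ] H :=
  haveI : CompleteSpace (eigSpan T γ) :=
    (Submodule.isClosed_topologicalClosure _).completeSpace_coe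
  (eigSpan T γ).subtypeL.comp (Submodule.orthogonalProjectionOnto (eigSpan T γ))

section AuxLemmas

open Metric Module.End

local notation "⟪" x ", " y "⟫" => @inner ℝ _ _ x y

lemma helper_eigvec (T : H →L[ℝ] H) (hcpt : IsCompactOperator T)
    (D : Submodule ℝ H) (hDc : IsClosed (D : Set H))
    (N : ℝ) (hN : 0 < N)
    (f : ℕ → H) (hfD : ∀ k, f k ∈ D) (hf1 : ∀ k, ‖f k‖ = 1)
    (hfb : ∀ k, ‖T (f k)‖ ≤ N)
    (hlim : Tendsto (fun k => ⟪T (f k), f k⟫) atTop (nhds N)) :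
    ∃ v ∈ D, v ≠ 0 ∧ T v = N • v := by
  have hsq : Tendsto (fun k => ‖T (f k) - N • f k‖ ^ 2) atTop (nhds 0) := by
    have hub : ∀ k, ‖T (f k) - N • f k‖ ^ 2 ≤ 2 * N ^ 2 - 2 * N * ⟪T (f k), f k⟫ := by
      intro k
      have h1 : ‖T (f k) - N • f k‖ ^ 2
          = ‖T (f k)‖ ^ 2 - 2 * ⟪T (f k), N • f k⟫ + ‖N • f k‖ ^ 2 := norm_sub_sq_real _ _
      have h2 : ⟪T (f k), N • f k⟫ = N * ⟪T (f k), f k⟫ := real_inner_smul_right _ _ _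
      have h3 : ‖N • f k‖ = |N| * ‖f k‖ := by rw [norm_smul]; rfl
      have h4 : ‖T (f k)‖ ^ 2 ≤ N ^ 2 := by
        have := hfb k
        nlinarith [norm_nonneg (T (f k))]
      rw [h1, h2, h3, hf1 k, abs_of_pos hN]
      nlinarith
    have hl : Tendsto (fun k => 2 * N ^ 2 - 2 * N * ⟪T (f k), f k⟫) atTop (nhds 0) := by
      have h2 := (tendsto_const_nhds (x := 2 * N ^ 2) (f := atTop (α := ℕ))).sub
        (hlim.const_mul (2 * N))
      have he : 2 * N ^ 2 - 2 * N * N = 0 := by ring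
      rwa [he] at h2
    exact squeeze_zero (fun k => sq_nonneg _) hub hl
  have hnorm : Tendsto (fun k => ‖T (f k) - N • f k‖) atTop (nhds 0) := by
    have := hsq.sqrt
    simpa [Real.sqrt_sq (norm_nonneg _)] using this
  have hvec : Tendsto (fun k => T (f k) - N • f k) atTop (nhds 0) :=
    tendsto_zero_iff_norm_tendsto_zero.mpr hnorm
  have hK : IsCompact (closure (T '' closedBall 0 1)) := by
    have : IsCompactOperator (T : H →ₗ[ℝ] H) := hcpt
    exact this.isCompact_closure_image_closedBall 1
  have hmem : ∀ k, T (f k) ∈ closure (T '' closedBall 0 1) := fun k =>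
    subset_closure ⟨f k, by simp [mem_closedBall_zero_iff, hf1 k], rfl⟩
  obtain ⟨y, hyK, φ, hφ, hconv⟩ := hK.tendsto_subseq hmem
  have hNf : Tendsto (fun j => N • f (φ j)) atTop (nhds y) := by
    have h1 : Tendsto (fun j => T (f (φ j)) - N • f (φ j)) atTop (nhds 0) :=
      hvec.comp hφ.tendsto_atTop
    have := hconv.sub h1
    simpa using this
  have hf' : Tendsto (fun j => f (φ j)) atTop (nhds (N⁻¹ • y)) := by
    have := hNf.const_smul N⁻¹
    simpa [smul_smul, inv_mul_cancel₀ hN.ne'] using this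
  refine ⟨N⁻¹ • y, ?_, ?_, ?_⟩
  · exact hDc.mem_of_tendsto hf' (Eventually.of_forall fun j => hfD _)
  · have h1 : Tendsto (fun j => ‖f (φ j)‖) atTop (nhds ‖N⁻¹ • y‖) := hf'.norm
    have h2 : Tendsto (fun j => ‖f (φ j)‖) atTop (nhds 1) := by
      simpa [hf1] using tendsto_const_nhds (x := (1:ℝ)) (f := atTop (α := ℕ))
    have : ‖N⁻¹ • y‖ = 1 := tendsto_nhds_unique h1 h2
    intro h0
    rw [h0] at this
    simp at this
  · have h1 : Tendsto (fun j => T (f (φ j))) atTop (nhds (T (N⁻¹ • y))) :=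
      (T.continuous.tendsto _).comp hf'
    have h2 : T (N⁻¹ • y) = y := tendsto_nhds_unique h1 hconv
    rw [h2, smul_smul, mul_inv_cancel₀ hN.ne', one_smul]

lemma exists_eigvec_of_invariant (T : H →L[ℝ] H) (hsa : IsSelfAdjoint T)
    (hcpt : IsCompactOperator T) (D : Submodule ℝ H) (hDc : IsClosed (D : Set H))
    (hDinv : ∀ x ∈ D, T x ∈ D) (hD : D ≠ ⊥) :
    ∃ μ : ℝ, ∃ v, v ∈ D ∧ v ≠ 0 ∧ T v = μ • v := by
  have hsym : ∀ a b : H, ⟪T a, b⟫ = ⟪a, T b⟫ := fun a b => hsa.isSymmetric a b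
  obtain ⟨x₀, hx₀D, hx₀⟩ := Submodule.exists_mem_ne_zero_of_ne_bot hD
  set U : Set H := {x | x ∈ D ∧ ‖x‖ = 1} with hU
  set S : Set ℝ := (fun x => ⟪T x, x⟫) '' U with hS
  have hu₀ : (‖x₀‖⁻¹ • x₀) ∈ U := by
    constructor
    · exact D.smul_mem _ hx₀D
    · rw [norm_smul, norm_inv, norm_norm, inv_mul_cancel₀ (norm_ne_zero_iff.mpr hx₀)]
  have hne : S.Nonempty := ⟨_, _, hu₀, rfl⟩
  have habs0 : ∀ x ∈ U, |⟪T x, x⟫| ≤ ‖T‖ := by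
    intro x hx
    calc |⟪T x, x⟫| ≤ ‖T x‖ * ‖x‖ := abs_real_inner_le_norm _ _
      _ ≤ ‖T‖ * ‖x‖ * ‖x‖ := by
          have := T.le_opNorm x
          nlinarith [norm_nonneg x]
      _ = ‖T‖ := by rw [hx.2]; ring
  have hbddA : BddAbove S := ⟨‖T‖, by rintro a ⟨x, hx, rfl⟩; exact (abs_le.mp (habs0 x hx)).2⟩
  have hbddB : BddBelow S := ⟨-‖T‖, by rintro a ⟨x, hx, rfl⟩; exact (abs_le.mp (habs0 x hx)).1⟩
  set M : ℝ := sSup S with hM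
  set m : ℝ := sInf S with hm
  set N : ℝ := max M (-m) with hNdef
  have habs : ∀ x ∈ U, |⟪T x, x⟫| ≤ N := by
    intro x hx
    have h1 : ⟪T x, x⟫ ≤ M := le_csSup hbddA ⟨x, hx, rfl⟩
    have h2 : m ≤ ⟪T x, x⟫ := csInf_le hbddB ⟨x, hx, rfl⟩
    rw [abs_le]
    constructor
    · have : -N ≤ m := by
        have := neg_le_neg (le_max_right M (-m))
        simpa using this
      linarith
    · exact le_trans h1 (le_max_left _ _)
  have hN0 : 0 ≤ N := le_trans (abs_nonneg _) (habs _ hu₀)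
  have hscale : ∀ x ∈ D, |⟪T x, x⟫| ≤ N * ‖x‖ ^ 2 := by
    intro x hxD
    by_cases hx : x = 0
    · simp [hx]
    · have hu : (‖x‖⁻¹ • x) ∈ U := by
        constructor
        · exact D.smul_mem _ hxD
        · rw [norm_smul, norm_inv, norm_norm, inv_mul_cancel₀ (norm_ne_zero_iff.mpr hx)]
      have he : ⟪T (‖x‖⁻¹ • x), ‖x‖⁻¹ • x⟫ = ‖x‖⁻¹ ^ 2 * ⟪T x, x⟫ := by
        rw [map_smul, real_inner_smul_left, real_inner_smul_right]
        ring
      have := habs _ hu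
      rw [he, abs_mul] at this
      have hxn : 0 < ‖x‖ := norm_pos_iff.mpr hx
      have h2 : |‖x‖⁻¹ ^ 2| = ‖x‖⁻¹ ^ 2 := abs_of_pos (by positivity)
      rw [h2] at this
      have h3 : ‖x‖⁻¹ ^ 2 * |⟪T x, x⟫| ≤ N := this
      calc |⟪T x, x⟫| = ‖x‖ ^ 2 * (‖x‖⁻¹ ^ 2 * |⟪T x, x⟫|) := by
            field_simp
        _ ≤ ‖x‖ ^ 2 * N := by nlinarith [sq_nonneg ‖x‖]
        _ = N * ‖x‖ ^ 2 := by ring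
  have hpolar : ∀ x ∈ D, ∀ y ∈ D, ⟪T x, y⟫ ≤ N / 2 * (‖x‖ ^ 2 + ‖y‖ ^ 2) := by
    intro x hx y hy
    have he : 4 * ⟪T x, y⟫ = ⟪T (x + y), x + y⟫ - ⟪T (x - y), x - y⟫ := by
      have hyx : ⟪T y, x⟫ = ⟪T x, y⟫ := by rw [hsym y x]; exact real_inner_comm _ _
      rw [map_add, map_sub, inner_add_left, inner_sub_left, inner_add_right, inner_add_right,
        inner_sub_right, inner_sub_right, hyx]
      ring
    have h1 : ⟪T (x + y), x + y⟫ ≤ N * ‖x + y‖ ^ 2 :=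
      (abs_le.mp (hscale _ (D.add_mem hx hy))).2
    have h2 : -(N * ‖x - y‖ ^ 2) ≤ ⟪T (x - y), x - y⟫ :=
      (abs_le.mp (hscale _ (D.sub_mem hx hy))).1
    have hpar := parallelogram_law_with_norm ℝ x y
    nlinarith [sq_nonneg (‖x‖ - ‖y‖)]
  have hbound : ∀ x ∈ D, ‖T x‖ ≤ N * ‖x‖ := by
    intro x hx
    by_cases hTx : T x = 0
    · rw [hTx]; simp; positivity
    · set y : H := (‖x‖ / ‖T x‖) • T x with hy
      have hyD : y ∈ D := D.smul_mem _ (hDinv x hx)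
      have hTxn : 0 < ‖T x‖ := norm_pos_iff.mpr hTx
      have hinner : ⟪T x, y⟫ = ‖x‖ * ‖T x‖ := by
        rw [hy, real_inner_smul_right, real_inner_self_eq_norm_sq]
        field_simp
      have hny : ‖y‖ = ‖x‖ := by
        rw [hy, norm_smul, norm_div, norm_norm, norm_norm]
        field_simp
      have := hpolar x hx y hyD
      rw [hinner, hny] at this
      by_cases hx0 : x = 0
      · exfalso; rw [hx0, map_zero] at hTx; exact hTx rfl
      · have hxn : 0 < ‖x‖ := norm_pos_iff.mpr hx0
        nlinarith
  rcases eq_or_lt_of_le hN0 with hN0' | hNpos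
  · refine ⟨0, x₀, hx₀D, hx₀, ?_⟩
    have h1 := hbound x₀ hx₀D
    rw [← hN0'] at h1
    simp only [zero_mul] at h1
    have : T x₀ = 0 := norm_le_zero_iff.mp h1
    rw [this, zero_smul]
  · rcases le_total (-m) M with hcase | hcase
    · have hNM : N = M := max_eq_left hcase
      have hch : ∀ k : ℕ, ∃ x, x ∈ U ∧ M - 1/(k+1) < ⟪T x, x⟫ := by
        intro k
        have hlt : M - 1/(k+1) < M := by
          have : (0:ℝ) < 1/(k+1) := by positivity
          linarith
        obtain ⟨a, ⟨x, hxU, rfl⟩, hlt'⟩ := exists_lt_of_lt_csSup hne hlt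
        exact ⟨x, hxU, hlt'⟩
      choose f hfU hflt using hch
      have hlim : Tendsto (fun k => ⟪T (f k), f k⟫) atTop (nhds N) := by
        rw [hNM]
        apply tendsto_of_tendsto_of_tendsto_of_le_of_le
          (g := fun k : ℕ => M - 1/(k+1)) (h := fun _ : ℕ => M)
        · have h0 : Tendsto (fun k : ℕ => 1/((k:ℝ)+1)) atTop (nhds 0) :=
            tendsto_one_div_add_atTop_nhds_zero_nat
          have := (tendsto_const_nhds (x := M) (f := atTop (α := ℕ))).sub h0
          simpa using this
        · exact tendsto_const_nhds
        · exact fun k => (hflt k).le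
        · exact fun k => le_csSup hbddA ⟨f k, hfU k, rfl⟩
      obtain ⟨v, hvD, hv0, hveq⟩ := helper_eigvec T hcpt D hDc N (hNpos) f
        (fun k => (hfU k).1) (fun k => (hfU k).2)
        (fun k => by simpa [(hfU k).2] using hbound _ (hfU k).1) hlim
      exact ⟨N, v, hvD, hv0, hveq⟩
    · have hNm : N = -m := max_eq_right hcase
      have hch : ∀ k : ℕ, ∃ x, x ∈ U ∧ ⟪T x, x⟫ < m + 1/(k+1) := by
        intro k
        have hlt : m < m + 1/(k+1) := by
          have : (0:ℝ) < 1/(k+1) := by positivity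
          linarith
        obtain ⟨a, ⟨x, hxU, rfl⟩, hlt'⟩ := exists_lt_of_csInf_lt hne hlt
        exact ⟨x, hxU, hlt'⟩
      choose f hfU hflt using hch
      have hcpt' : IsCompactOperator (⇑(-T)) := by
        have := hcpt.neg
        simpa using this
      have hlim : Tendsto (fun k => ⟪(-T) (f k), f k⟫) atTop (nhds N) := by
        have he : ∀ k, ⟪(-T) (f k), f k⟫ = -⟪T (f k), f k⟫ := by
          intro k
          rw [ContinuousLinearMap.neg_apply, inner_neg_left]
        rw [hNm]
        apply tendsto_of_tendsto_of_tendsto_of_le_of_le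
          (g := fun k : ℕ => -m - 1/(k+1)) (h := fun _ : ℕ => -m)
        · have h0 : Tendsto (fun k : ℕ => 1/((k:ℝ)+1)) atTop (nhds 0) :=
            tendsto_one_div_add_atTop_nhds_zero_nat
          have := (tendsto_const_nhds (x := -m) (f := atTop (α := ℕ))).sub h0
          simpa using this
        · exact tendsto_const_nhds
        · intro k
          simp only [ContinuousLinearMap.neg_apply, inner_neg_left]
          have := hflt k
          linarith
        · intro k
          simp only [ContinuousLinearMap.neg_apply, inner_neg_left]
          have : m ≤ ⟪T (f k), f k⟫ := csInf_le hbddB ⟨f k, hfU k, rfl⟩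
          linarith
      obtain ⟨v, hvD, hv0, hveq⟩ := helper_eigvec (-T) hcpt' D hDc N (hNpos) f
        (fun k => (hfU k).1) (fun k => (hfU k).2)
        (fun k => by
          rw [ContinuousLinearMap.neg_apply, norm_neg]
          simpa [(hfU k).2] using hbound _ (hfU k).1) hlim
      refine ⟨-N, v, hvD, hv0, ?_⟩
      rw [ContinuousLinearMap.neg_apply] at hveq
      rw [neg_smul, ← hveq, neg_neg]

lemma biSup_eig_invariant (T : H →L[ℝ] H) (s : Set ℝ) :
    ∀ x ∈ (⨆ r ∈ s, eigenspace (T : H →ₗ[ℝ] H) r),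
      T x ∈ (⨆ r ∈ s, eigenspace (T : H →ₗ[ℝ] H) r) := by
  intro x hx
  have hmap : Submodule.map (T : H →ₗ[ℝ] H) (⨆ r ∈ s, eigenspace (T : H →ₗ[ℝ] H) r)
      ≤ ⨆ r ∈ s, eigenspace (T : H →ₗ[ℝ] H) r := by
    rw [Submodule.map_iSup]
    refine iSup_le fun r => ?_
    rw [Submodule.map_iSup]
    refine iSup_le fun hr => ?_
    refine le_trans ?_ (le_iSup₂ (f := fun r _ => eigenspace (T : H →ₗ[ℝ] H) r) r hr)
    rintro y ⟨z, hz, rfl⟩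
    have hz' : (T : H →ₗ[ℝ] H) z = r • z := mem_eigenspace_iff.mp hz
    rw [mem_eigenspace_iff, hz']
    rw [map_smul, hz']
  exact hmap ⟨x, hx, rfl⟩

lemma closure_invariant (T : H →L[ℝ] H) (p : Submodule ℝ H) (h : ∀ x ∈ p, T x ∈ p) :
    ∀ x ∈ p.topologicalClosure, T x ∈ p.topologicalClosure := by
  intro x hx
  have hx' : x ∈ closure (p : Set H) := by
    rwa [← Submodule.topologicalClosure_coe]
  have hmt : Set.MapsTo T (p : Set H) (p : Set H) := h
  have := hmt.closure T.continuous hx'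
  rwa [← Submodule.topologicalClosure_coe] at this

lemma orthogonal_invariant (T : H →L[ℝ] H) (hTsa : IsSelfAdjoint T) (p : Submodule ℝ H)
    (h : ∀ x ∈ p, T x ∈ p) : ∀ x ∈ pᗮ, T x ∈ pᗮ := by
  intro x hx
  rw [Submodule.mem_orthogonal] at hx ⊢
  intro u hu
  have := hTsa.isSymmetric u x
  calc ⟪u, T x⟫ = ⟪T u, x⟫ := (hTsa.isSymmetric u x).symm
    _ = 0 := hx _ (h u hu)

lemma inner_eig_biSup_zero (T : H →L[ℝ] H) (hTsa : IsSelfAdjoint T) (s : Set ℝ) (r : ℝ)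
    (hr : r ∉ s) (v : H) (hv : v ∈ eigenspace (T : H →ₗ[ℝ] H) r) :
    ∀ u ∈ (⨆ r' ∈ s, eigenspace (T : H →ₗ[ℝ] H) r'), ⟪u, v⟫ = 0 := by
  intro u hu
  rw [Submodule.mem_iSup_iff_exists_finsupp] at hu
  obtain ⟨f, hf, rfl⟩ := hu
  rw [Finsupp.sum, sum_inner]
  refine Finset.sum_eq_zero fun r' hr' => ?_
  have hfr : f r' ∈ eigenspace (T : H →ₗ[ℝ] H) r' ∧ r' ∈ s ∨ f r' = 0 := by
    by_cases hmem : r' ∈ s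
    · left
      have := hf r'
      rw [iSup_pos hmem] at this
      exact ⟨this, hmem⟩
    · right
      have := hf r'
      rw [iSup_neg hmem] at this
      simpa using this
  rcases hfr with ⟨hfr, hrs⟩ | hfr
  · have hne : r' ≠ r := fun h => hr (h ▸ hrs)
    exact hTsa.isSymmetric.orthogonalFamily_eigenspaces hne ⟨f r', hfr⟩ ⟨v, hv⟩
  · simp [hfr]

lemma eig_lower_bound (T : H →L[ℝ] H) (hTsa : IsSelfAdjoint T) (c : ℝ) (hc : 0 ≤ c) :
    ∀ x ∈ (⨆ r ∈ {r : ℝ | c < |r|}, eigenspace (T : H →ₗ[ℝ] H) r), c * ‖x‖ ≤ ‖T x‖ := by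
  intro x hx
  rw [Submodule.mem_iSup_iff_exists_finsupp] at hx
  obtain ⟨f, hf, rfl⟩ := hx
  have hfe : ∀ r, f r ∈ eigenspace (T : H →ₗ[ℝ] H) r := by
    intro r
    by_cases hmem : r ∈ {r : ℝ | c < |r|}
    · have := hf r; rwa [iSup_pos hmem] at this
    · have := hf r; rw [iSup_neg hmem] at this
      simp only [Submodule.mem_bot] at this
      rw [this]; exact Submodule.zero_mem _
  have hOF := hTsa.isSymmetric.orthogonalFamily_eigenspaces (𝕜 := ℝ)
  set x : H := f.sum fun _ xi => xi with hxdef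
  have hxs : x = ∑ r ∈ f.support,
      (eigenspace (T : H →ₗ[ℝ] H) r).subtypeₗᵢ ⟨f r, hfe r⟩ := by
    rw [hxdef, Finsupp.sum]; rfl
  have hnx : ‖x‖ ^ 2 = ∑ r ∈ f.support, ‖f r‖ ^ 2 := by
    rw [hxs, hOF.norm_sum]
    rfl
  have hTx : T x = ∑ r ∈ f.support,
      (eigenspace (T : H →ₗ[ℝ] H) r).subtypeₗᵢ ⟨r • f r, Submodule.smul_mem _ _ (hfe r)⟩ := by
    rw [hxs, map_sum]
    refine Finset.sum_congr rfl fun r _ => ?_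
    have : (T : H →ₗ[ℝ] H) (f r) = r • f r := mem_eigenspace_iff.mp (hfe r)
    simpa using this
  have hnTx : ‖T x‖ ^ 2 = ∑ r ∈ f.support, r ^ 2 * ‖f r‖ ^ 2 := by
    rw [hTx, hOF.norm_sum]
    refine Finset.sum_congr rfl fun r _ => ?_
    have : ‖(⟨r • f r, Submodule.smul_mem _ _ (hfe r)⟩ : eigenspace (T : H →ₗ[ℝ] H) r)‖ = |r| * ‖f r‖ := by
      simp [norm_smul]
    rw [this, mul_pow, sq_abs]
  have hsq : (c * ‖x‖) ^ 2 ≤ ‖T x‖ ^ 2 := by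
    rw [mul_pow, hnx, hnTx, Finset.mul_sum]
    refine Finset.sum_le_sum fun r hr => ?_
    have hrc : c < |r| := by
      by_contra hmem
      have h5 := hf r
      rw [iSup_neg (show ¬ r ∈ {r : ℝ | c < |r|} from hmem)] at h5
      simp only [Submodule.mem_bot] at h5
      exact Finsupp.mem_support_iff.mp hr h5
    have h6 : c ^ 2 ≤ r ^ 2 := by
      rw [← sq_abs r]
      nlinarith [abs_nonneg r]
    nlinarith [sq_nonneg (‖f r‖)]
  have h1 : 0 ≤ c * ‖x‖ := by positivity
  nlinarith [norm_nonneg (T x)]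

lemma findim_of_lower_bound (T : H →L[ℝ] H) (hTcpt : IsCompactOperator T)
    (K : Submodule ℝ H) (hKc : IsClosed (K : Set H)) (c : ℝ) (hc : 0 < c)
    (hlow : ∀ x ∈ K, c * ‖x‖ ≤ ‖T x‖) : FiniteDimensional ℝ K := by
  haveI : CompleteSpace K := hKc.completeSpace_coe
  set g : K →L[ℝ] H := T.comp K.subtypeL with hg
  have hanti : AntilipschitzWith (⟨c, hc.le⟩ : NNReal)⁻¹ g := by
    refine AntilipschitzWith.of_le_mul_dist fun x y => ?_
    rw [dist_eq_norm, dist_eq_norm, ← map_sub]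
    have : g (x - y) = T ((x : H) - (y : H)) := by simp [hg]
    rw [this]
    have h2 := hlow ((x : H) - (y : H)) (K.sub_mem x.2 y.2)
    have : ‖x - y‖ = ‖(x : H) - (y : H)‖ := rfl
    rw [this]
    have hcoe : (((⟨c, hc.le⟩ : NNReal)⁻¹ : NNReal) : ℝ) = c⁻¹ := by
      exact NNReal.coe_inv _
    rw [hcoe]
    calc ‖(x:H) - (y:H)‖ = c⁻¹ * (c * ‖(x:H) - (y:H)‖) := by field_simp
      _ ≤ c⁻¹ * ‖T ((x:H) - (y:H))‖ := by
          have : (0:ℝ) ≤ c⁻¹ := by positivity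
          nlinarith
  have htb : TotallyBounded (closedBall (0 : K) 1) := by
    rw [← totallyBounded_image_iff (hanti.isUniformInducing g.uniformContinuous)]
    have hsub : g '' closedBall (0 : K) 1 ⊆ closure (T '' closedBall (0 : H) 1) := by
      rintro y ⟨x, hx, rfl⟩
      refine subset_closure ⟨(x : H), ?_, rfl⟩
      rw [mem_closedBall_zero_iff] at hx ⊢
      exact hx
    have hcpt : IsCompact (closure (T '' closedBall (0 : H) 1)) := by
      have : IsCompactOperator (T : H →ₗ[ℝ] H) := hTcpt
      exact this.isCompact_closure_image_closedBall 1
    exact hcpt.totallyBounded.subset hsub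
  have hcompact : IsCompact (closedBall (0 : K) 1) :=
    TotallyBounded.isCompact_of_isClosed htb Metric.isClosed_closedBall
  exact FiniteDimensional.of_isCompact_closedBall₀ ℝ one_pos hcompact

end AuxLemmas

open Metric Module.End

local notation "⟪" x ", " y "⟫" => @inner ℝ _ _ x y

set_option maxHeartbeats 1000000 in
set_option synthInstance.maxHeartbeats 200000 in
/-- let `T_n → T` in operator norm (all compact and self-adjoint), let `c > 0` be
such that no eigenvalue of `T` has absolute value exactly `c`, and let `E` be the closed span of
the eigenvectors of `T` with eigenvalue `|λ| < c` (including the kernel).  If `φ_n` is a unit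
eigenvector of `T_n` with eigenvalue `λ_n`, `|λ_n| < c`, then the distance from `φ_n` to `E`
tends to `0`. -/
theorem stmt_8 [TopologicalSpace.SeparableSpace H]
    (T : H →L[ℝ] H) (hTsa : IsSelfAdjoint T) (hTcpt : IsCompactOperator T)
    (Tn : ℕ → H →L[ℝ] H)
    (hTnsa : ∀ n, IsSelfAdjoint (Tn n)) (hTncpt : ∀ n, IsCompactOperator (Tn n))
    (hconv : Tendsto (fun n => ‖Tn n - T‖) atTop (nhds 0))
    (c : ℝ) (hc : 0 < c)
    (hgap : ∀ r : ℝ, Module.End.HasEigenvalue (T : H →ₗ[ℝ] H) r → |r| ≠ c)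
    (φn : ℕ → H) (lam : ℕ → ℝ)
    (hunit : ∀ n, ‖φn n‖ = 1)
    (heig : ∀ n, Tn n (φn n) = lam n • φn n)
    (hlam : ∀ n, |lam n| < c) :
    Tendsto (fun n => ‖φn n - specProj T {r : ℝ | |r| < c} (φn n)‖) atTop (nhds 0) := by
  classical
  set γ : Set ℝ := {r : ℝ | |r| < c} with hγdef
  set P : Submodule ℝ H := ⨆ r ∈ γ, eigenspace (T : H →ₗ[ℝ] H) r with hPdef
  set E : Submodule ℝ H := eigSpan T γ with hEdef
  have hEP : E = P.topologicalClosure := rfl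
  have hEc : IsClosed (E : Set H) := Submodule.isClosed_topologicalClosure _
  haveI : CompleteSpace E := hEc.completeSpace_coe
  set W : Submodule ℝ H := ⨆ r ∈ {r : ℝ | c < |r|}, eigenspace (T : H →ₗ[ℝ] H) r with hWdef
  set Wc : Submodule ℝ H := W.topologicalClosure with hWcdef
  have hWcc : IsClosed (Wc : Set H) := Submodule.isClosed_topologicalClosure _
  haveI : CompleteSpace Wc := hWcc.completeSpace_coe
  -- invariance
  have hEinv : ∀ x ∈ E, T x ∈ E := by
    rw [hEP]; exact closure_invariant T P (biSup_eig_invariant T γ)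
  have hFinv : ∀ x ∈ Eᗮ, T x ∈ Eᗮ := orthogonal_invariant T hTsa E hEinv
  have hWoinv : ∀ x ∈ Wᗮ, T x ∈ Wᗮ :=
    orthogonal_invariant T hTsa W (biSup_eig_invariant T _)
  have heigE : ∀ r : ℝ, |r| < c → eigenspace (T : H →ₗ[ℝ] H) r ≤ E := by
    intro r hr
    rw [hEP]
    exact le_trans (le_iSup₂ (f := fun (r : ℝ) (_ : r ∈ γ) => eigenspace (T : H →ₗ[ℝ] H) r) r
      (show r ∈ γ from hr)) P.le_topologicalClosure
  -- Eᗮ = Pᗮ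
  have hEorth : Eᗮ = Pᗮ := by
    rw [hEP, ← P.orthogonal_orthogonal_eq_closure]
    haveI : CompleteSpace Pᗮ := (Submodule.isClosed_orthogonal P).completeSpace_coe
    haveI : Submodule.HasOrthogonalProjection Pᗮ := Submodule.HasOrthogonalProjection.ofCompleteSpace Pᗮ
    exact Submodule.orthogonal_orthogonal Pᗮ
  -- W ≤ Eᗮ
  have hWF : W ≤ Eᗮ := by
    rw [hEorth]
    refine iSup₂_le fun r hr v hv => ?_
    rw [Submodule.mem_orthogonal]
    intro u hu
    refine inner_eig_biSup_zero T hTsa γ r ?_ v hv u hu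
    intro hmem
    rw [hγdef] at hmem
    simp only [Set.mem_setOf_eq] at hmem hr
    linarith
  have hWcF : Wc ≤ Eᗮ :=
    W.topologicalClosure_minimal hWF (Submodule.isClosed_orthogonal E)
  -- the residual space is trivial
  have hD : Wᗮ ⊓ Eᗮ = ⊥ := by
    by_contra hne
    obtain ⟨μ, v, hvD, hv0, hveq⟩ := exists_eigvec_of_invariant T hTsa hTcpt (Wᗮ ⊓ Eᗮ)
      (by
        have h1 : IsClosed ((Wᗮ : Set H) ∩ (Eᗮ : Set H)) :=
          (Submodule.isClosed_orthogonal W).inter (Submodule.isClosed_orthogonal E)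
        simpa using h1)
      (fun x hx => by
        rw [Submodule.mem_inf] at hx ⊢
        exact ⟨hWoinv x hx.1, hFinv x hx.2⟩) hne
    rw [Submodule.mem_inf] at hvD
    have hveig : v ∈ eigenspace (T : H →ₗ[ℝ] H) μ := mem_eigenspace_iff.mpr hveq
    rcases lt_trichotomy |μ| c with h | h | h
    · have hvE : v ∈ E := heigE μ h hveig
      have h0 : ⟪v, v⟫ = 0 := (Submodule.mem_orthogonal E v).mp hvD.2 v hvE
      exact hv0 (inner_self_eq_zero.mp h0)
    · exact hgap μ (hasEigenvalue_of_hasEigenvector ⟨hveig, hv0⟩) h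
    · have hvW : v ∈ W := by
        rw [hWdef]
        exact le_iSup₂ (f := fun (r : ℝ) (_ : r ∈ {r : ℝ | c < |r|}) => eigenspace (T : H →ₗ[ℝ] H) r)
          μ (show μ ∈ {r : ℝ | c < |r|} from h) hveig
      have h0 : ⟪v, v⟫ = 0 := (Submodule.mem_orthogonal W v).mp hvD.1 v hvW
      exact hv0 (inner_self_eq_zero.mp h0)
  -- Eᗮ ≤ Wc
  have hWcorth : Wcᗮ = Wᗮ := by
    rw [hWcdef, ← W.orthogonal_orthogonal_eq_closure]
    haveI : CompleteSpace Wᗮ := (Submodule.isClosed_orthogonal W).completeSpace_coe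
    haveI : Submodule.HasOrthogonalProjection Wᗮ := Submodule.HasOrthogonalProjection.ofCompleteSpace Wᗮ
    exact Submodule.orthogonal_orthogonal Wᗮ
  have hFW : Eᗮ ≤ Wc := by
    intro x hx
    obtain ⟨y, hy, z, hz, hxyz⟩ := Wc.exists_add_mem_mem_orthogonal x
    have hzW : z ∈ Wᗮ := by rwa [hWcorth] at hz
    have hzF : z ∈ Eᗮ := by
      have : z = x - y := by rw [hxyz]; abel
      rw [this]
      exact Submodule.sub_mem _ hx (hWcF hy)
    have hzD : z ∈ Wᗮ ⊓ Eᗮ := Submodule.mem_inf.mpr ⟨hzW, hzF⟩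
    rw [hD, Submodule.mem_bot] at hzD
    rw [hxyz, hzD, add_zero]
    exact hy
  -- lower bound on Eᗮ
  have hlowW : ∀ x ∈ W, c * ‖x‖ ≤ ‖T x‖ := eig_lower_bound T hTsa c hc.le
  have hlowF : ∀ x ∈ Eᗮ, c * ‖x‖ ≤ ‖T x‖ := by
    intro x hx
    have hxcl : x ∈ closure (W : Set H) := by
      have := hFW hx
      rwa [← Submodule.topologicalClosure_coe]
    have hCc : IsClosed {y : H | c * ‖y‖ ≤ ‖T y‖} :=
      isClosed_le (continuous_const.mul continuous_norm) T.continuous.norm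
    exact closure_minimal hlowW hCc hxcl
  haveI hFfin : FiniteDimensional ℝ Eᗮ :=
    findim_of_lower_bound T hTcpt Eᗮ (Submodule.isClosed_orthogonal E) c hc hlowF
  -- uniform lower bound for T - l on Eᗮ
  have hdelta : ∃ δ : ℝ, 0 < δ ∧ ∀ l ∈ Set.Icc (-c) c, ∀ x ∈ Eᗮ, δ * ‖x‖ ≤ ‖T x - l • x‖ := by
    by_cases hFbot : Eᗮ = ⊥
    · refine ⟨1, one_pos, fun l _ x hx => ?_⟩
      rw [hFbot, Submodule.mem_bot] at hx
      simp [hx]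
    · obtain ⟨x₀, hx₀F, hx₀⟩ := Submodule.exists_mem_ne_zero_of_ne_bot hFbot
      set Sph : Set H := ((↑) '' (sphere (0 : Eᗮ) 1) : Set H) with hSphdef
      have hmemS : ∀ x ∈ Eᗮ, ‖x‖ = 1 → x ∈ Sph := by
        intro x hx h1
        exact ⟨⟨x, hx⟩, by rwa [mem_sphere_zero_iff_norm], rfl⟩
      have hSmem : ∀ y ∈ Sph, y ∈ Eᗮ ∧ ‖y‖ = 1 := by
        rintro y ⟨v, hv, rfl⟩
        exact ⟨v.2, by rwa [mem_sphere_zero_iff_norm] at hv⟩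
      have hSphcpt : IsCompact Sph := (isCompact_sphere (0 : Eᗮ) 1).image continuous_subtype_val
      have hKc : IsCompact ((Set.Icc (-c) c) ×ˢ Sph) := isCompact_Icc.prod hSphcpt
      have hKne : ((Set.Icc (-c) c) ×ˢ Sph).Nonempty := by
        refine ⟨(0, ‖x₀‖⁻¹ • x₀), Set.mem_prod.mpr ⟨?_, ?_⟩⟩
        · constructor <;> [linarith; linarith]
        · refine hmemS _ (Eᗮ.smul_mem _ hx₀F) ?_
          rw [norm_smul, norm_inv, norm_norm, inv_mul_cancel₀ (norm_ne_zero_iff.mpr hx₀)]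
      have hcont : ContinuousOn (fun p : ℝ × H => ‖T p.2 - p.1 • p.2‖)
          ((Set.Icc (-c) c) ×ˢ Sph) := by
        apply Continuous.continuousOn
        exact ((T.continuous.comp continuous_snd).sub (continuous_fst.smul continuous_snd)).norm
      obtain ⟨p₀, hp₀K, hp₀min⟩ := hKc.exists_isMinOn hKne hcont
      obtain ⟨hp₀1, hp₀2⟩ := Set.mem_prod.mp hp₀K
      obtain ⟨hp₀F, hp₀n⟩ := hSmem _ hp₀2
      set δ : ℝ := ‖T p₀.2 - p₀.1 • p₀.2‖ with hδdef
      have hδpos : 0 < δ := by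
        rcases (norm_nonneg (T p₀.2 - p₀.1 • p₀.2)).lt_or_eq with h | h
        · exact h
        · exfalso
          have heq : T p₀.2 = p₀.1 • p₀.2 := by
            have := h.symm
            rw [norm_eq_zero, sub_eq_zero] at this
            exact this
          have hv0 : p₀.2 ≠ 0 := by
            intro h0
            rw [h0, norm_zero] at hp₀n
            norm_num at hp₀n
          have hveig : p₀.2 ∈ eigenspace (T : H →ₗ[ℝ] H) p₀.1 := mem_eigenspace_iff.mpr heq
          rcases lt_trichotomy |p₀.1| c with hh | hh | hh
          · have hvE : p₀.2 ∈ E := heigE p₀.1 hh hveig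
            have h0 : ⟪p₀.2, p₀.2⟫ = 0 := (Submodule.mem_orthogonal E _).mp hp₀F _ hvE
            exact hv0 (inner_self_eq_zero.mp h0)
          · exact hgap p₀.1 (hasEigenvalue_of_hasEigenvector ⟨hveig, hv0⟩) hh
          · have habs : |p₀.1| ≤ c := abs_le.mpr ⟨hp₀1.1, hp₀1.2⟩
            linarith
      refine ⟨δ, hδpos, fun l hl x hx => ?_⟩
      by_cases hx0 : x = 0
      · simp [hx0]
      · have hxn : 0 < ‖x‖ := norm_pos_iff.mpr hx0
        set u : H := ‖x‖⁻¹ • x with hudef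
        have huS : u ∈ Sph := by
          refine hmemS _ (Eᗮ.smul_mem _ hx) ?_
          rw [hudef, norm_smul, norm_inv, norm_norm, inv_mul_cancel₀ hxn.ne']
        have hmem : (l, u) ∈ (Set.Icc (-c) c) ×ˢ Sph := Set.mem_prod.mpr ⟨hl, huS⟩
        have hge : δ ≤ ‖T u - l • u‖ := isMinOn_iff.mp hp₀min (l, u) hmem
        have hcomp : T u - l • u = ‖x‖⁻¹ • (T x - l • x) := by
          rw [hudef, map_smul, smul_sub, smul_comm]
        rw [hcomp, norm_smul, norm_inv, norm_norm] at hge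
        have h2 : δ * ‖x‖ ≤ ‖x‖⁻¹ * ‖T x - l • x‖ * ‖x‖ := by nlinarith
        calc δ * ‖x‖ ≤ ‖x‖⁻¹ * ‖T x - l • x‖ * ‖x‖ := h2
          _ = ‖T x - l • x‖ := by field_simp
  obtain ⟨δ, hδpos, hmin⟩ := hdelta
  have key : ∀ n, ‖φn n - specProj T γ (φn n)‖ ≤ δ⁻¹ * ‖Tn n - T‖ := by
    intro n
    set x : H := φn n with hxdef
    set e : H := (Submodule.orthogonalProjectionOnto E x : H) with hedef
    set f : H := x - e with hfdef
    have hfF : f ∈ Eᗮ := Submodule.sub_starProjection_mem_orthogonal x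
    have heE : e ∈ E := Submodule.coe_mem _
    have h1 : ‖T x - lam n • x‖ ≤ ‖Tn n - T‖ := by
      have h2 : T x - lam n • x = (T - Tn n) x := by
        rw [ContinuousLinearMap.sub_apply, heig n]
      rw [h2]
      calc ‖(T - Tn n) x‖ ≤ ‖T - Tn n‖ * ‖x‖ := (T - Tn n).le_opNorm x
        _ = ‖T - Tn n‖ := by rw [hxdef, hunit n, mul_one]
        _ = ‖Tn n - T‖ := by rw [norm_sub_rev]
    have hsplit : T x - lam n • x = (T e - lam n • e) + (T f - lam n • f) := by
      have hx : x = e + f := by rw [hfdef]; abel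
      calc T x - lam n • x = T (e + f) - lam n • (e + f) := by rw [← hx]
        _ = (T e - lam n • e) + (T f - lam n • f) := by rw [map_add, smul_add]; abel
    have hEmem : T e - lam n • e ∈ E := E.sub_mem (hEinv e heE) (E.smul_mem _ heE)
    have hFmem : T f - lam n • f ∈ Eᗮ := Eᗮ.sub_mem (hFinv f hfF) (Eᗮ.smul_mem _ hfF)
    have horth : ⟪T e - lam n • e, T f - lam n • f⟫ = 0 :=
      (Submodule.mem_orthogonal E _).mp hFmem _ hEmem
    have hle : ‖T f - lam n • f‖ ≤ ‖T x - lam n • x‖ := by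
      rw [hsplit]
      have hexp := norm_add_sq_real (T e - lam n • e) (T f - lam n • f)
      rw [horth] at hexp
      nlinarith [norm_nonneg (T e - lam n • e), norm_nonneg (T f - lam n • f),
        norm_nonneg ((T e - lam n • e) + (T f - lam n • f))]
    have hIcc : lam n ∈ Set.Icc (-c) c := by
      have h3 := (hlam n).le
      rw [abs_le] at h3
      exact ⟨h3.1, h3.2⟩
    have hδf := hmin (lam n) hIcc f hfF
    have hPr : ‖x - specProj T γ x‖ = ‖f‖ := rfl
    rw [hPr]
    have h4 : δ * ‖f‖ ≤ ‖Tn n - T‖ := le_trans hδf (le_trans hle h1)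
    calc ‖f‖ = δ⁻¹ * (δ * ‖f‖) := by field_simp
      _ ≤ δ⁻¹ * ‖Tn n - T‖ := by
          have : (0:ℝ) ≤ δ⁻¹ := by positivity
          nlinarith
  have h0 : Tendsto (fun n => δ⁻¹ * ‖Tn n - T‖) atTop (nhds 0) := by
    have := hconv.const_mul δ⁻¹
    simpa using this
  exact squeeze_zero (fun n => norm_nonneg _) key h0
end

section
/- Let W : [0,1]^2 → [0,1] be a graphon with integral operator T_W on L²[0,1]. Then the cut norm and the L²-induced operator norm satisfy ‖W‖_□ ≤ ‖T_W‖ ≤ √(8 · ‖W‖_□). -/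
open MeasureTheory

/-- Lebesgue measure restricted to the unit interval `[0,1]`. -/
noncomputable def μ01 : Measure ℝ := volume.restrict (Set.Icc (0 : ℝ) 1)

/-- The cut norm of a kernel `W` on `[0,1]²`:
`‖W‖_□ = sup { |∫_{S×T} W(u,v) du dv| : S, T ⊆ [0,1] measurable }`. -/
noncomputable def cutNorm (W : ℝ → ℝ → ℝ) : ℝ :=
  sSup {r : ℝ | ∃ S T : Set ℝ, MeasurableSet S ∧ MeasurableSet T ∧
    S ⊆ Set.Icc (0 : ℝ) 1 ∧ T ⊆ Set.Icc (0 : ℝ) 1 ∧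
    r = |∫ u in S, ∫ v in T, W u v|}

instance : IsProbabilityMeasure μ01 :=
  ⟨by simp [μ01, Real.volume_Icc]⟩

/-- kernel power iterates -/
noncomputable def iterK (W : ℝ → ℝ → ℝ) (f : ℝ → ℝ) : ℕ → ℝ → ℝ
  | 0 => f
  | k + 1 => fun v => ∫ u, W u v * iterK W f k u ∂μ01

/-- Cauchy-Schwarz for integrals. -/
lemma cs_int (μ : Measure ℝ) (g h : ℝ → ℝ)
    (hgg : Integrable (fun a => g a * g a) μ)
    (hhh : Integrable (fun a => h a * h a) μ)
    (hgh : Integrable (fun a => g a * h a) μ) :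
    (∫ a, g a * h a ∂μ) ^ 2 ≤ (∫ a, g a * g a ∂μ) * (∫ a, h a * h a ∂μ) := by
  have key : ∀ t : ℝ, 0 ≤ (∫ a, g a * g a ∂μ) * (t * t)
      + (2 * ∫ a, g a * h a ∂μ) * t + (∫ a, h a * h a ∂μ) := by
    intro t
    have hexp : (fun a => (t * g a + h a) * (t * g a + h a))
        = fun a => (t * t) * (g a * g a) + ((2 * t) * (g a * h a) + h a * h a) := by
      funext a; ring
    have h1 : Integrable (fun a => (t * g a + h a) * (t * g a + h a)) μ := by
      rw [hexp]; exact (hgg.const_mul _).add ((hgh.const_mul _).add hhh)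
    have h2 : 0 ≤ ∫ a, (t * g a + h a) * (t * g a + h a) ∂μ :=
      integral_nonneg fun a => mul_self_nonneg _
    have i1 : Integrable (fun a => (2 * t) * (g a * h a) + h a * h a) μ :=
      (hgh.const_mul _).add hhh
    have h3 : ∫ a, (t * g a + h a) * (t * g a + h a) ∂μ
        = (t * t) * (∫ a, g a * g a ∂μ) + ((2 * t) * (∫ a, g a * h a ∂μ)
          + ∫ a, h a * h a ∂μ) := by
      rw [hexp, integral_add (hgg.const_mul _) i1,
        integral_add (hgh.const_mul _) hhh, integral_const_mul, integral_const_mul]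
    rw [h3] at h2; linarith
  have hd := discrim_le_zero key
  rw [discrim] at hd
  nlinarith [hd]

section Aux

variable (W : ℝ → ℝ → ℝ)

lemma cut_bddAbove (hWrange : ∀ u v : ℝ, W u v ∈ Set.Icc (0 : ℝ) 1) :
    BddAbove {r : ℝ | ∃ S T : Set ℝ, MeasurableSet S ∧ MeasurableSet T ∧
      S ⊆ Set.Icc (0 : ℝ) 1 ∧ T ⊆ Set.Icc (0 : ℝ) 1 ∧
      r = |∫ u in S, ∫ v in T, W u v|} := by
  refine ⟨1, fun r hr => ?_⟩
  obtain ⟨S, T, hS, hT, hSsub, hTsub, rfl⟩ := hr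
  have hfinS : IsFiniteMeasure (volume.restrict S) := by
    constructor
    rw [Measure.restrict_apply_univ]
    exact lt_of_le_of_lt (measure_mono hSsub) (by simp [Real.volume_Icc])
  have hfinT : IsFiniteMeasure (volume.restrict T) := by
    constructor
    rw [Measure.restrict_apply_univ]
    exact lt_of_le_of_lt (measure_mono hTsub) (by simp [Real.volume_Icc])
  have hvolS : (volume S).toReal ≤ 1 := by
    refine ENNReal.toReal_mono ENNReal.one_ne_top ?_
    calc volume S ≤ volume (Set.Icc (0:ℝ) 1) := measure_mono hSsub
    _ = 1 := by simp [Real.volume_Icc]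
  have hvolT : (volume T).toReal ≤ 1 := by
    refine ENNReal.toReal_mono ENNReal.one_ne_top ?_
    calc volume T ≤ volume (Set.Icc (0:ℝ) 1) := measure_mono hTsub
    _ = 1 := by simp [Real.volume_Icc]
  have hinner : ∀ u : ℝ, ‖∫ v in T, W u v‖ ≤ 1 := by
    intro u
    have := norm_integral_le_of_norm_le_const (μ := volume.restrict T)
      (f := fun v => W u v) (C := 1)
      (Filter.Eventually.of_forall fun v => by
        rw [Real.norm_eq_abs, abs_of_nonneg (hWrange u v).1]; exact (hWrange u v).2)
    refine this.trans ?_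
    rw [Measure.real, Measure.restrict_apply_univ]; linarith
  have houter := norm_integral_le_of_norm_le_const (μ := volume.restrict S)
      (f := fun u => ∫ v in T, W u v) (C := 1)
      (Filter.Eventually.of_forall hinner)
  rw [Measure.real, Measure.restrict_apply_univ] at houter
  calc |∫ u in S, ∫ v in T, W u v| = ‖∫ u in S, ∫ v in T, W u v‖ := (Real.norm_eq_abs _).symm
  _ ≤ 1 * (volume S).toReal := houter
  _ ≤ 1 := by linarith

lemma cut_nonneg : 0 ≤ cutNorm W ∨ True := Or.inr trivial

end Aux

lemma iterK_zero (W : ℝ → ℝ → ℝ) (f : ℝ → ℝ) : iterK W f 0 = f := rfl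

lemma iterK_succ (W : ℝ → ℝ → ℝ) (f : ℝ → ℝ) (k : ℕ) :
    iterK W f (k + 1) = fun v => ∫ u, W u v * iterK W f k u ∂μ01 := rfl

lemma integral_kernel_measurable (W : ℝ → ℝ → ℝ)
    (hWmeas : Measurable (Function.uncurry W)) (g : ℝ → ℝ) (hgm : Measurable g) :
    Measurable fun v => ∫ u, W u v * g u ∂μ01 := by
  have hm : Measurable (Function.uncurry fun v u => W u v * g u) :=
    (hWmeas.comp measurable_swap).mul (hgm.comp measurable_snd)
  exact (StronglyMeasurable.integral_prod_right (f := fun v u => W u v * g u)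
    hm.stronglyMeasurable).measurable

lemma cutNorm_nonneg (W : ℝ → ℝ → ℝ)
    (hWrange : ∀ u v : ℝ, W u v ∈ Set.Icc (0 : ℝ) 1) : 0 ≤ cutNorm W := by
  have hmem : (0:ℝ) ∈ {r : ℝ | ∃ S T : Set ℝ, MeasurableSet S ∧ MeasurableSet T ∧
      S ⊆ Set.Icc (0 : ℝ) 1 ∧ T ⊆ Set.Icc (0 : ℝ) 1 ∧
      r = |∫ u in S, ∫ v in T, W u v|} :=
    ⟨∅, ∅, MeasurableSet.empty, MeasurableSet.empty, Set.empty_subset _, Set.empty_subset _,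
      by simp⟩
  exact le_csSup (cut_bddAbove W hWrange) hmem

lemma double_int_le (W : ℝ → ℝ → ℝ)
    (hWmeas : Measurable (Function.uncurry W))
    (hWrange : ∀ u v : ℝ, W u v ∈ Set.Icc (0 : ℝ) 1) :
    ∫ v, ∫ u, W u v ∂μ01 ∂μ01 ≤ cutNorm W := by
  have hprod : Integrable (Function.uncurry W) (μ01.prod μ01) := by
    refine (integrable_const (1:ℝ)).mono' hWmeas.aestronglyMeasurable
      (Filter.Eventually.of_forall fun p => ?_)
    rw [Real.norm_eq_abs, Function.uncurry_apply_pair,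
      abs_of_nonneg (hWrange p.1 p.2).1]
    exact (hWrange p.1 p.2).2
  have hswap : ∫ u, ∫ v, W u v ∂μ01 ∂μ01 = ∫ v, ∫ u, W u v ∂μ01 ∂μ01 :=
    integral_integral_swap hprod
  have hmem : |∫ u in Set.Icc (0:ℝ) 1, ∫ v in Set.Icc (0:ℝ) 1, W u v| ∈
      {r : ℝ | ∃ S T : Set ℝ, MeasurableSet S ∧ MeasurableSet T ∧
      S ⊆ Set.Icc (0 : ℝ) 1 ∧ T ⊆ Set.Icc (0 : ℝ) 1 ∧
      r = |∫ u in S, ∫ v in T, W u v|} :=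
    ⟨_, _, measurableSet_Icc, measurableSet_Icc, subset_rfl, subset_rfl, rfl⟩
  have hle := le_csSup (cut_bddAbove W hWrange) hmem
  have hid : (∫ u in Set.Icc (0:ℝ) 1, ∫ v in Set.Icc (0:ℝ) 1, W u v)
      = ∫ u, ∫ v, W u v ∂μ01 ∂μ01 := rfl
  rw [hid] at hle
  calc ∫ v, ∫ u, W u v ∂μ01 ∂μ01 = ∫ u, ∫ v, W u v ∂μ01 ∂μ01 := hswap.symm
  _ ≤ |∫ u, ∫ v, W u v ∂μ01 ∂μ01| := le_abs_self _
  _ ≤ cutNorm W := hle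

lemma kernel_prod_integrable (W : ℝ → ℝ → ℝ)
    (hWmeas : Measurable (Function.uncurry W))
    (hWrange : ∀ u v : ℝ, W u v ∈ Set.Icc (0 : ℝ) 1)
    (g h : ℝ → ℝ) (C : ℝ)
    (hgm : Measurable g) (hgi : Integrable g μ01) (hg0 : ∀ x, 0 ≤ g x)
    (hhm : Measurable h) (hh0 : ∀ x, 0 ≤ h x) (hhC : ∀ x, h x ≤ C) :
    Integrable (fun p : ℝ × ℝ => (W p.2 p.1 * g p.2) * h p.1) (μ01.prod μ01) := by
  have hFm : Measurable (fun p : ℝ × ℝ => (W p.2 p.1 * g p.2) * h p.1) :=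
    ((hWmeas.comp measurable_swap).mul (hgm.comp measurable_snd)).mul (hhm.comp measurable_fst)
  have hptbound : ∀ x y : ℝ, ‖(W y x * g y) * h x‖ ≤ C * g y := by
    intro x y
    rw [Real.norm_eq_abs, abs_of_nonneg
      (mul_nonneg (mul_nonneg ((hWrange y x).1) (hg0 y)) (hh0 x))]
    have h1 : W y x * g y ≤ g y := by nlinarith [(hWrange y x).2, hg0 y, (hWrange y x).1]
    have h2 : (W y x * g y) * h x ≤ g y * C :=
      mul_le_mul h1 (hhC x) (hh0 x) (hg0 y)
    linarith
  have hinner : ∀ x : ℝ, Integrable (fun y => (W y x * g y) * h x) μ01 := by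
    intro x
    refine (hgi.const_mul C).mono'
      (((hWmeas.comp (measurable_id.prodMk measurable_const)).mul hgm).mul_const
        (h x)).aestronglyMeasurable
      (Filter.Eventually.of_forall fun y => hptbound x y)
  rw [integrable_prod_iff hFm.aestronglyMeasurable]
  constructor
  · exact Filter.Eventually.of_forall hinner
  · have hmeas2 : StronglyMeasurable fun x => ∫ y, ‖(W y x * g y) * h x‖ ∂μ01 :=
      StronglyMeasurable.integral_prod_right'
        (f := fun p : ℝ × ℝ => ‖(W p.2 p.1 * g p.2) * h p.1‖) hFm.norm.stronglyMeasurable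
    refine (integrable_const (C * ∫ u, g u ∂μ01)).mono' hmeas2.aestronglyMeasurable
      (Filter.Eventually.of_forall fun x => ?_)
    have hnn : 0 ≤ ∫ y, ‖(W y x * g y) * h x‖ ∂μ01 :=
      integral_nonneg fun y => norm_nonneg _
    rw [Real.norm_eq_abs, abs_of_nonneg hnn]
    calc ∫ y, ‖(W y x * g y) * h x‖ ∂μ01 ≤ ∫ y, C * g y ∂μ01 :=
      integral_mono (hinner x).norm (hgi.const_mul C) (hptbound x)
    _ = C * ∫ u, g u ∂μ01 := integral_const_mul _ _

theorem aux_q1_le (W : ℝ → ℝ → ℝ)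
    (hWmeas : Measurable (Function.uncurry W))
    (hWsym : ∀ u v : ℝ, W u v = W v u)
    (hWrange : ∀ u v : ℝ, W u v ∈ Set.Icc (0 : ℝ) 1)
    (f : ℝ → ℝ) (hfm : Measurable f) (hf0 : ∀ u, 0 ≤ f u)
    (hf2 : MemLp f 2 μ01) (hf2le : ∫ u, f u * f u ∂μ01 ≤ 1) :
    ∫ v, iterK W f 1 v * iterK W f 1 v ∂μ01 ≤ cutNorm W := by
  set c := cutNorm W with hcdef
  have hW0 : ∀ u v, 0 ≤ W u v := fun u v => (hWrange u v).1
  have hW1 : ∀ u v, W u v ≤ 1 := fun u v => (hWrange u v).2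
  have hc0 : 0 ≤ c := cutNorm_nonneg W hWrange
  have hfint : Integrable f μ01 := hf2.integrable one_le_two
  -- measurability and nonnegativity of iterates
  have hmeas : ∀ k, Measurable (iterK W f k) := by
    intro k; induction k with
    | zero => exact hfm
    | succ k ih =>
      rw [iterK_succ]; exact integral_kernel_measurable W hWmeas _ ih
  have h0 : ∀ k v, 0 ≤ iterK W f k v := by
    intro k; induction k with
    | zero => exact hf0
    | succ k ih =>
      intro v; rw [iterK_succ]
      exact integral_nonneg fun u => mul_nonneg (hW0 u v) (ih u)
  -- integrability and upper bounds
  have hintegrand : ∀ k v, Integrable (fun u => W u v * iterK W f k u) μ01 →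
      True := fun _ _ _ => trivial
  have hstepint : ∀ k, Integrable (iterK W f k) μ01 →
      (∀ v, iterK W f (k+1) v ≤ ∫ u, iterK W f k u ∂μ01) ∧
        Integrable (iterK W f (k+1)) μ01 := by
    intro k hi
    have hinteg : ∀ v, Integrable (fun u => W u v * iterK W f k u) μ01 := by
      intro v
      refine hi.mono' ((hWmeas.comp (measurable_id.prodMk measurable_const)).mul
        (hmeas k)).aestronglyMeasurable (Filter.Eventually.of_forall fun u => ?_)
      rw [Real.norm_eq_abs, abs_of_nonneg (mul_nonneg (hW0 u v) (h0 k u))]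
      nlinarith [hW1 u v, hW0 u v, h0 k u]
    have hub : ∀ v, iterK W f (k+1) v ≤ ∫ u, iterK W f k u ∂μ01 := by
      intro v; rw [iterK_succ]
      refine integral_mono (hinteg v) hi fun u => ?_
      nlinarith [hW1 u v, h0 k u]
    refine ⟨hub, ?_⟩
    refine (integrable_const (∫ u, iterK W f k u ∂μ01)).mono'
      (hmeas (k+1)).aestronglyMeasurable (Filter.Eventually.of_forall fun v => ?_)
    rw [Real.norm_eq_abs, abs_of_nonneg (h0 (k+1) v)]
    exact hub v
  have hint : ∀ k, Integrable (iterK W f k) μ01 := by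
    intro k; induction k with
    | zero => exact hfint
    | succ k ih => exact (hstepint k ih).2
  have hub : ∀ k v, iterK W f (k+1) v ≤ ∫ u, iterK W f k u ∂μ01 :=
    fun k => (hstepint k (hint k)).1
  set I : ℕ → ℝ := fun k => ∫ v, iterK W f k v ∂μ01 with hIdef
  have hI0 : ∀ k, 0 ≤ I k := fun k => integral_nonneg fun v => h0 k v
  -- basic kernel integrability
  have hWv : ∀ v, Integrable (fun u => W u v) μ01 := by
    intro v
    refine (integrable_const (1:ℝ)).mono'
      (hWmeas.comp (measurable_id.prodMk measurable_const)).aestronglyMeasurable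
      (Filter.Eventually.of_forall fun u => ?_)
    rw [Real.norm_eq_abs, abs_of_nonneg (hW0 u v)]; exact hW1 u v
  have hWIm : Measurable fun v => ∫ u, W u v ∂μ01 :=
    (StronglyMeasurable.integral_prod_right (f := fun v u => W u v)
      ((hWmeas.comp measurable_swap).stronglyMeasurable)).measurable
  have hWIint : Integrable (fun v => ∫ u, W u v ∂μ01) μ01 := by
    refine (integrable_const (1:ℝ)).mono' hWIm.aestronglyMeasurable
      (Filter.Eventually.of_forall fun v => ?_)
    rw [Real.norm_eq_abs, abs_of_nonneg (integral_nonneg fun u => hW0 u v)]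
    calc ∫ u, W u v ∂μ01 ≤ ∫ u, (1:ℝ) ∂μ01 :=
      integral_mono (hWv v) (integrable_const 1) (fun u => hW1 u v)
    _ = 1 := by simp
  -- the key decay step
  have hIstep : ∀ k, I (k+2) ≤ c * I k := by
    intro k
    have hinteg : ∀ v, Integrable (fun u => W u v * iterK W f (k+1) u) μ01 := by
      intro v
      refine (hint (k+1)).mono' ((hWmeas.comp (measurable_id.prodMk
        measurable_const)).mul (hmeas (k+1))).aestronglyMeasurable
        (Filter.Eventually.of_forall fun u => ?_)
      rw [Real.norm_eq_abs, abs_of_nonneg (mul_nonneg (hW0 u v) (h0 (k+1) u))]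
      nlinarith [hW1 u v, h0 (k+1) u]
    have h1 : ∀ v, iterK W f (k+2) v ≤ (∫ u, W u v ∂μ01) * I k := by
      intro v
      rw [iterK_succ]
      calc ∫ u, W u v * iterK W f (k+1) u ∂μ01 ≤ ∫ u, W u v * I k ∂μ01 := by
            refine integral_mono (hinteg v) ((hWv v).mul_const _) fun u => ?_
            exact mul_le_mul_of_nonneg_left (hub k u) (hW0 u v)
      _ = (∫ u, W u v ∂μ01) * I k := integral_mul_const _ _
    have h2 : I (k+2) ≤ ∫ v, (∫ u, W u v ∂μ01) * I k ∂μ01 :=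
      integral_mono (hint (k+2)) (hWIint.mul_const _) h1
    calc I (k+2) ≤ ∫ v, (∫ u, W u v ∂μ01) * I k ∂μ01 := h2
    _ = (∫ v, ∫ u, W u v ∂μ01 ∂μ01) * I k := integral_mul_const _ _
    _ ≤ c * I k := mul_le_mul_of_nonneg_right (double_int_le W hWmeas hWrange) (hI0 k)
  have hI2 : ∀ j k, I (2*j + k) ≤ c^j * I k := by
    intro j; induction j with
    | zero => intro k; simp
    | succ j ih =>
      intro k
      have hidx : 2*(j+1) + k = (2*j + k) + 2 := by ring
      rw [hidx]
      calc I ((2*j+k)+2) ≤ c * I (2*j+k) := hIstep _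
      _ ≤ c * (c^j * I k) := mul_le_mul_of_nonneg_left (ih k) hc0
      _ = c^(j+1) * I k := by ring
  -- Fubini shift
  have hshift : ∀ j k (C : ℝ), (∀ v, iterK W f k v ≤ C) →
      ∫ v, iterK W f (j+1) v * iterK W f k v ∂μ01
        = ∫ u, iterK W f j u * iterK W f (k+1) u ∂μ01 := by
    intro j k C hkC
    have hprodI : Integrable
        (fun p : ℝ × ℝ => (W p.2 p.1 * iterK W f j p.2) * iterK W f k p.1)
        (μ01.prod μ01) :=
      kernel_prod_integrable W hWmeas hWrange _ _ C (hmeas j) (hint j) (h0 j)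
        (hmeas k) (h0 k) hkC
    calc ∫ v, iterK W f (j+1) v * iterK W f k v ∂μ01
        = ∫ v, ∫ u, (W u v * iterK W f j u) * iterK W f k v ∂μ01 ∂μ01 := by
          refine integral_congr_ae (Filter.Eventually.of_forall fun v => ?_)
          simp only [iterK_succ]
          exact (integral_mul_const _ _).symm
      _ = ∫ u, ∫ v, (W u v * iterK W f j u) * iterK W f k v ∂μ01 ∂μ01 :=
          integral_integral_swap
            (f := fun v u => (W u v * iterK W f j u) * iterK W f k v) hprodI
      _ = ∫ u, iterK W f j u * iterK W f (k+1) u ∂μ01 := by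
          refine integral_congr_ae (Filter.Eventually.of_forall fun u => ?_)
          simp only [iterK_succ]
          have hpt : (fun v => (W u v * iterK W f j u) * iterK W f k v)
              = fun v => iterK W f j u * (W v u * iterK W f k v) := by
            funext v; rw [hWsym u v]; ring
          rw [hpt]
          exact integral_const_mul _ _
  have hmove : ∀ i a m, ∫ v, iterK W f (a+i) v * iterK W f (m+1) v ∂μ01
      = ∫ v, iterK W f a v * iterK W f (m+1+i) v ∂μ01 := by
    intro i; induction i with
    | zero => intro a m; simp
    | succ i ih =>
      intro a m
      have e1 : a + (i+1) = (a+i) + 1 := rfl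
      rw [e1, hshift (a+i) (m+1) (I m) (hub m)]
      have e2 : m + 1 + (i+1) = (m+1+1) + i := by omega
      rw [e2]
      exact ih a (m+1)
  set q : ℕ → ℝ := fun k => ∫ v, iterK W f k v * iterK W f k v ∂μ01 with hqdef
  have hq0 : ∀ k, 0 ≤ q k := fun k => integral_nonneg fun v => mul_self_nonneg _
  have hq0le : q 0 ≤ 1 := hf2le
  have hsqint : ∀ k, Integrable (fun v => iterK W f k v * iterK W f k v) μ01 := by
    intro k; cases k with
    | zero =>
      have := hf2.integrable_sq
      simpa only [pow_two, iterK_zero] using this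
    | succ k =>
      refine (integrable_const (I k * I k)).mono'
        ((hmeas (k+1)).mul (hmeas (k+1))).aestronglyMeasurable
        (Filter.Eventually.of_forall fun v => ?_)
      rw [Real.norm_eq_abs, abs_of_nonneg (mul_self_nonneg _)]
      exact mul_le_mul (hub k v) (hub k v) (h0 _ v) (hI0 k)
  have hmixint : ∀ k, Integrable (fun v => f v * iterK W f (k+1) v) μ01 := by
    intro k
    refine (hfint.const_mul (I k)).mono'
      (hfm.mul (hmeas (k+1))).aestronglyMeasurable
      (Filter.Eventually.of_forall fun v => ?_)
    rw [Real.norm_eq_abs, abs_of_nonneg (mul_nonneg (hf0 v) (h0 (k+1) v))]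
    calc f v * iterK W f (k+1) v ≤ f v * I k :=
      mul_le_mul_of_nonneg_left (hub k v) (hf0 v)
    _ = I k * f v := mul_comm _ _
  have hcs : ∀ m : ℕ, (q (m+1))^2 ≤ q 0 * q (2*(m+1)) := by
    intro m
    have e : m + 1 + (m+1) = 2*(m+1) := by omega
    have h1 : q (m+1) = ∫ v, f v * iterK W f (2*(m+1)) v ∂μ01 := by
      have h' := hmove (m+1) 0 m
      simp only [Nat.zero_add, e, iterK_zero] at h'
      exact h'
    have h2m : 2*(m+1) = (2*m+1) + 1 := by omega
    have hcs2 := cs_int μ01 f (iterK W f (2*(m+1))) (hsqint 0)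
      (hsqint (2*(m+1))) (by rw [h2m]; exact hmixint (2*m+1))
    rw [h1]
    exact hcs2
  have hqsucc : ∀ k, q (k+1) ≤ I k * I (k+1) := by
    intro k
    have hstep1 : q (k+1) ≤ ∫ v, I k * iterK W f (k+1) v ∂μ01 := by
      refine integral_mono (hsqint (k+1)) ((hint (k+1)).const_mul _) fun v => ?_
      exact mul_le_mul_of_nonneg_right (hub k v) (h0 (k+1) v)
    calc q (k+1) ≤ ∫ v, I k * iterK W f (k+1) v ∂μ01 := hstep1
    _ = I k * I (k+1) := integral_const_mul _ _
  have hmain : ∀ n, (q 1)^(2^n) ≤ q (2^n) := by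
    intro n; induction n with
    | zero => simp
    | succ n ih =>
      have h2 : (q 1)^(2^(n+1)) = ((q 1)^(2^n))^2 := by
        rw [pow_succ, pow_mul]
      have hpow : 1 ≤ 2^n := Nat.one_le_two_pow
      obtain ⟨m, hm⟩ : ∃ m, 2^n = m + 1 := ⟨2^n - 1, by omega⟩
      calc (q 1)^(2^(n+1)) = ((q 1)^(2^n))^2 := h2
      _ ≤ (q (2^n))^2 := by
          refine pow_le_pow_left₀ (pow_nonneg (hq0 1) _) ih 2
      _ ≤ q 0 * q (2*2^n) := by rw [hm]; exact hcs m
      _ ≤ 1 * q (2*2^n) := mul_le_mul_of_nonneg_right hq0le (hq0 _)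
      _ = q (2^(n+1)) := by rw [one_mul]; congr 1; ring
  have hI0le : I 0 ≤ 1 := by
    have hone : Integrable (fun _ : ℝ => (1:ℝ) * (1:ℝ)) μ01 := by
      simpa using integrable_const (1:ℝ)
    have hfone : Integrable (fun v => f v * (1:ℝ)) μ01 := by simpa using hfint
    have hcs1 := cs_int μ01 f (fun _ => (1:ℝ)) (hsqint 0) hone hfone
    have h11 : (∫ _ : ℝ, (1:ℝ) * (1:ℝ) ∂μ01) = 1 := by simp
    have hIeq : (∫ v, f v * (1:ℝ) ∂μ01) = I 0 := by simp [hIdef, iterK_zero]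
    rw [h11, hIeq, mul_one] at hcs1
    nlinarith [hI0 0, hq0le, hcs1]
  have hI1le : I 1 ≤ 1 := by
    have : I 1 ≤ I 0 := by
      calc I 1 ≤ ∫ _ : ℝ, I 0 ∂μ01 :=
        integral_mono (hint 1) (integrable_const _) (hub 0)
      _ = I 0 := by simp
    linarith
  have hnum : ∀ n : ℕ, (q 1)^(2^(n+1)) ≤ c^(2^(n+1) - 1) := by
    intro n
    have hpow : 1 ≤ 2^n := Nat.one_le_two_pow
    set m : ℕ := 2^n - 1 with hmdef
    have hK : 2^(n+1) = 2*m + 2 := by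
      have : 2^(n+1) = 2 * 2^n := by ring
      omega
    have h1 : q (2*m+2) ≤ I (2*m+1) * I (2*m+2) := hqsucc (2*m+1)
    have hIa : I (2*m+1) ≤ c^m * I 1 := hI2 m 1
    have hIb : I (2*m+2) ≤ c^(m+1) * I 0 := by
      have := hI2 (m+1) 0
      have e : 2*(m+1) + 0 = 2*m+2 := by ring
      rwa [e] at this
    calc (q 1)^(2^(n+1)) ≤ q (2^(n+1)) := hmain (n+1)
    _ = q (2*m+2) := by rw [hK]
    _ ≤ I (2*m+1) * I (2*m+2) := h1
    _ ≤ (c^m * I 1) * (c^(m+1) * I 0) := by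
        exact mul_le_mul hIa hIb (hI0 _) (mul_nonneg (pow_nonneg hc0 _) (hI0 1))
    _ ≤ (c^m * 1) * (c^(m+1) * 1) := by
        have hcm : (0:ℝ) ≤ c^m := pow_nonneg hc0 _
        have hcm1 : (0:ℝ) ≤ c^(m+1) := pow_nonneg hc0 _
        have := mul_le_mul (mul_le_mul_of_nonneg_left hI1le hcm)
          (mul_le_mul_of_nonneg_left hI0le hcm1)
          (mul_nonneg hcm1 (hI0 0)) (by nlinarith [hI1le, hI0 1])
        exact this
    _ = c^(2*m+1) := by ring
    _ = c^(2^(n+1) - 1) := by congr 1; omega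
  have hq1c : q 1 ≤ c := by
    by_contra hcon
    push_neg at hcon
    have hq1pos : 0 < q 1 := lt_of_le_of_lt hc0 hcon
    rcases eq_or_lt_of_le hc0 with hceq | hcpos
    · have h00 := hnum 0
      rw [← hceq] at h00
      norm_num at h00
      nlinarith [h00, hq1pos]
    · have hr : 1 < q 1 / c := (one_lt_div hcpos).2 hcon
      obtain ⟨n₀, hn₀⟩ := pow_unbounded_of_one_lt (1/c) hr
      set N := 2^(n₀+1) with hNdef
      have hn₀N : n₀ ≤ N := by
        have := Nat.lt_two_pow_self (n := n₀)
        have h2 : 2^n₀ ≤ 2^(n₀+1) := Nat.pow_le_pow_right (by norm_num) (by omega)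
        omega
      have hN1 : 1 ≤ N := Nat.one_le_two_pow
      have hN : (q 1 / c)^n₀ ≤ (q 1 / c)^N :=
        pow_le_pow_right₀ (le_of_lt hr) hn₀N
      have h2 : (1/c : ℝ) < (q 1 / c)^N := lt_of_lt_of_le hn₀ hN
      have h3 : (q 1)^N ≤ c^(N-1) := hnum n₀
      have hcN : c^(N-1) = c^N / c := by
        rw [eq_div_iff (ne_of_gt hcpos), ← pow_succ]
        congr 1; omega
      rw [hcN] at h3
      have hcNpos : 0 < (c:ℝ)^N := pow_pos hcpos N
      rw [div_pow, lt_div_iff₀ hcNpos] at h2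
      have : c^N / c < (q 1)^N := by
        calc c^N / c = (1/c) * c^N := by ring
        _ < (q 1)^N := h2
      linarith
  exact hq1c

/-- for a graphon `W` with integral operator `T_W` on `L²[0,1]`,
`‖W‖_□ ≤ ‖T_W‖ ≤ √(8 ‖W‖_□)`. -/
theorem stmt_9 (W : ℝ → ℝ → ℝ)
    (hWmeas : Measurable (Function.uncurry W))
    (hWsym : ∀ u v : ℝ, W u v = W v u)
    (hWrange : ∀ u v : ℝ, W u v ∈ Set.Icc (0 : ℝ) 1)
    (T : Lp ℝ 2 μ01 →L[ℝ] Lp ℝ 2 μ01)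
    (hT : ∀ X : Lp ℝ 2 μ01, (T X : ℝ → ℝ) =ᵐ[μ01] fun v => ∫ u, W u v * X u ∂μ01) :
    cutNorm W ≤ ‖T‖ ∧ ‖T‖ ≤ Real.sqrt (8 * cutNorm W) := by
  have hW0 : ∀ u v, 0 ≤ W u v := fun u v => (hWrange u v).1
  have hW1 : ∀ u v, W u v ≤ 1 := fun u v => (hWrange u v).2
  have hc0 : 0 ≤ cutNorm W := cutNorm_nonneg W hWrange
  constructor
  · -- lower bound
    refine csSup_le ⟨0, ∅, ∅, MeasurableSet.empty, MeasurableSet.empty,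
      Set.empty_subset _, Set.empty_subset _, by simp⟩ ?_
    rintro r ⟨S, T', hS, hT', hSsub, hT'sub, rfl⟩
    have hμS : μ01 S ≠ ⊤ := (measure_lt_top μ01 S).ne
    have hμT : μ01 T' ≠ ⊤ := (measure_lt_top μ01 T').ne
    haveI hfinS : IsFiniteMeasure (μ01.restrict S) :=
      ⟨by rw [Measure.restrict_apply_univ]; exact measure_lt_top _ _⟩
    haveI hfinT : IsFiniteMeasure (μ01.restrict T') :=
      ⟨by rw [Measure.restrict_apply_univ]; exact measure_lt_top _ _⟩
    set X : Lp ℝ 2 μ01 := indicatorConstLp 2 hS hμS (1:ℝ) with hXdef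
    set Y : Lp ℝ 2 μ01 := indicatorConstLp 2 hT' hμT (1:ℝ) with hYdef
    have hresS : μ01.restrict S = volume.restrict S := by
      rw [show μ01 = volume.restrict (Set.Icc (0:ℝ) 1) from rfl,
        Measure.restrict_restrict hS, Set.inter_eq_self_of_subset_left hSsub]
    have hresT : μ01.restrict T' = volume.restrict T' := by
      rw [show μ01 = volume.restrict (Set.Icc (0:ℝ) 1) from rfl,
        Measure.restrict_restrict hT', Set.inter_eq_self_of_subset_left hT'sub]
    have hXcoe : (X : ℝ → ℝ) =ᵐ[μ01] S.indicator fun _ => (1:ℝ) := indicatorConstLp_coeFn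
    have hYcoe : (Y : ℝ → ℝ) =ᵐ[μ01] T'.indicator fun _ => (1:ℝ) := indicatorConstLp_coeFn
    have key : (inner ℝ (T X) Y : ℝ) = ∫ u in S, ∫ v in T', W u v := by
      rw [L2.inner_def]
      have e0 : ∫ v, (inner ℝ ((T X : ℝ → ℝ) v) ((Y : ℝ → ℝ) v) : ℝ) ∂μ01
          = ∫ v, (T X : ℝ → ℝ) v * (Y : ℝ → ℝ) v ∂μ01 := by
        simp only [RCLike.inner_apply, starRingEnd_apply, star_trivial]
        exact integral_congr_ae (Filter.Eventually.of_forall fun v => mul_comm _ _)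
      have e1 : ∫ v, (T X : ℝ → ℝ) v * (Y : ℝ → ℝ) v ∂μ01
          = ∫ v, (∫ u, W u v * (X : ℝ → ℝ) u ∂μ01)
              * (T'.indicator (fun _ => (1:ℝ)) v) ∂μ01 :=
        integral_congr_ae ((hT X).mul hYcoe)
      have e2 : ∀ v : ℝ, ∫ u, W u v * (X : ℝ → ℝ) u ∂μ01 = ∫ u in S, W u v ∂μ01 := by
        intro v
        have e2a : ∫ u, W u v * (X : ℝ → ℝ) u ∂μ01
            = ∫ u, W u v * (S.indicator (fun _ => (1:ℝ)) u) ∂μ01 :=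
          integral_congr_ae (hXcoe.mono fun u hu => by simp only [hu])
        have e2b : (fun u => W u v * S.indicator (fun _ => (1:ℝ)) u)
            = S.indicator (fun u => W u v) := by
          funext u; by_cases hu : u ∈ S <;> simp [hu]
        rw [e2a, e2b, integral_indicator hS]
      have e3 : (fun v => (∫ u in S, W u v ∂μ01) * T'.indicator (fun _ => (1:ℝ)) v)
          = T'.indicator (fun v => ∫ u in S, W u v ∂μ01) := by
        funext v; by_cases hv : v ∈ T' <;> simp [hv]
      have e4 : Integrable (Function.uncurry fun v u => W u v)
          ((μ01.restrict T').prod (μ01.restrict S)) := by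
        refine (integrable_const (1:ℝ)).mono'
          ((hWmeas.comp measurable_swap).aestronglyMeasurable)
          (Filter.Eventually.of_forall fun p => ?_)
        rw [Real.norm_eq_abs]
        have := hW0 p.2 p.1
        have := hW1 p.2 p.1
        rw [abs_of_nonneg] <;> simp_all [Function.uncurry]
      calc ∫ v, (inner ℝ ((T X : ℝ → ℝ) v) ((Y : ℝ → ℝ) v) : ℝ) ∂μ01
          = ∫ v, (∫ u, W u v * (X : ℝ → ℝ) u ∂μ01)
              * (T'.indicator (fun _ => (1:ℝ)) v) ∂μ01 := by rw [e0, e1]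
        _ = ∫ v, (∫ u in S, W u v ∂μ01) * (T'.indicator (fun _ => (1:ℝ)) v) ∂μ01 := by
            refine integral_congr_ae (Filter.Eventually.of_forall fun v => ?_)
            simp only [e2]
        _ = ∫ v in T', ∫ u in S, W u v ∂μ01 ∂μ01 := by rw [e3, integral_indicator hT']
        _ = ∫ u in S, ∫ v in T', W u v ∂μ01 ∂μ01 :=
            integral_integral_swap (f := fun v u => W u v) e4
        _ = ∫ u in S, ∫ v in T', W u v := by rw [hresS, hresT]
    have hXn : ‖X‖ ≤ 1 := by
      rw [hXdef, norm_indicatorConstLp (by norm_num) (by norm_num)]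
      simp only [norm_one, one_mul]
      refine Real.rpow_le_one ENNReal.toReal_nonneg ?_ (by norm_num)
      exact ENNReal.toReal_mono ENNReal.one_ne_top prob_le_one
    have hYn : ‖Y‖ ≤ 1 := by
      rw [hYdef, norm_indicatorConstLp (by norm_num) (by norm_num)]
      simp only [norm_one, one_mul]
      refine Real.rpow_le_one ENNReal.toReal_nonneg ?_ (by norm_num)
      exact ENNReal.toReal_mono ENNReal.one_ne_top prob_le_one
    calc |∫ u in S, ∫ v in T', W u v| = |(inner ℝ (T X) Y : ℝ)| := by rw [key]
    _ ≤ ‖T X‖ * ‖Y‖ := abs_real_inner_le_norm _ _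
    _ ≤ (‖T‖ * ‖X‖) * ‖Y‖ :=
        mul_le_mul_of_nonneg_right (T.le_opNorm X) (norm_nonneg Y)
    _ ≤ (‖T‖ * 1) * 1 := by
        have h1 : ‖T‖ * ‖X‖ ≤ ‖T‖ * 1 :=
          mul_le_mul_of_nonneg_left hXn (norm_nonneg T)
        have h2 : 0 ≤ ‖T‖ * ‖X‖ := mul_nonneg (norm_nonneg T) (norm_nonneg X)
        nlinarith [hYn, norm_nonneg Y]
    _ = ‖T‖ := by ring
  · -- upper bound
    have hup : ∀ x : Lp ℝ 2 μ01, ‖x‖ ≤ 1 → ‖T x‖ ≤ Real.sqrt (cutNorm W) := by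
      intro x hx
      have hxm := Lp.aestronglyMeasurable x
      set x' : ℝ → ℝ := hxm.mk (x : ℝ → ℝ) with hx'def
      have hx'sm : StronglyMeasurable x' := hxm.stronglyMeasurable_mk
      have hxeq : (x : ℝ → ℝ) =ᵐ[μ01] x' := hxm.ae_eq_mk
      set f₀ : ℝ → ℝ := fun u => |x' u| with hf₀def
      have hf₀m : Measurable f₀ := hx'sm.measurable.abs
      have hf₀0 : ∀ u, 0 ≤ f₀ u := fun u => abs_nonneg _
      have hf₀eq : (fun u => |(x : ℝ → ℝ) u|) =ᵐ[μ01] f₀ :=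
        hxeq.mono fun u hu => by rw [hf₀def]; simp only []; rw [hu]
      have hf₀2 : MemLp f₀ 2 μ01 := by
        have h1 : MemLp (fun u => |(x : ℝ → ℝ) u|) 2 μ01 := (Lp.memLp x).abs
        exact h1.ae_eq hf₀eq
      have hxx : ∫ u, (x : ℝ → ℝ) u * (x : ℝ → ℝ) u ∂μ01 = ‖x‖^2 := by
        have h1 : (inner ℝ x x : ℝ) = ∫ u, (inner ℝ ((x:ℝ→ℝ) u) ((x:ℝ→ℝ) u) : ℝ) ∂μ01 :=
          L2.inner_def x x
        rw [real_inner_self_eq_norm_sq] at h1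
        simp only [RCLike.inner_apply, starRingEnd_apply, star_trivial] at h1
        exact h1.symm
      have hq0eq : ∫ u, f₀ u * f₀ u ∂μ01 = ‖x‖^2 := by
        rw [← hxx]
        refine integral_congr_ae (hxeq.mono fun u hu => ?_)
        show f₀ u * f₀ u = (x : ℝ → ℝ) u * (x : ℝ → ℝ) u
        rw [hu]
        exact abs_mul_abs_self _
      have hf2le : ∫ u, f₀ u * f₀ u ∂μ01 ≤ 1 := by
        rw [hq0eq]; nlinarith [norm_nonneg x, hx]
      have hkey := aux_q1_le W hWmeas hWsym hWrange f₀ hf₀m hf₀0 hf₀2 hf2le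
      have hf₀int : Integrable f₀ μ01 := hf₀2.integrable one_le_two
      have hF1m : Measurable (iterK W f₀ 1) := by
        rw [iterK_succ]; exact integral_kernel_measurable W hWmeas _ hf₀m
      have hF10 : ∀ v, 0 ≤ iterK W f₀ 1 v := by
        intro v; rw [iterK_succ]
        exact integral_nonneg fun u => mul_nonneg (hW0 u v) (hf₀0 u)
      have hF1ub : ∀ v, iterK W f₀ 1 v ≤ ∫ u, f₀ u ∂μ01 := by
        intro v; rw [iterK_succ]
        refine integral_mono ?_ hf₀int fun u => ?_
        · refine hf₀int.mono' ((hWmeas.comp (measurable_id.prodMk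
            measurable_const)).mul hf₀m).aestronglyMeasurable
            (Filter.Eventually.of_forall fun u => ?_)
          show ‖W u v * f₀ u‖ ≤ f₀ u
          rw [Real.norm_eq_abs, abs_of_nonneg (mul_nonneg (hW0 u v) (hf₀0 u))]
          nlinarith [hW1 u v, hf₀0 u]
        · show W u v * f₀ u ≤ f₀ u
          nlinarith [hW1 u v, hf₀0 u]
      have hF1int2 : Integrable (fun v => iterK W f₀ 1 v * iterK W f₀ 1 v) μ01 := by
        refine (integrable_const ((∫ u, f₀ u ∂μ01) * (∫ u, f₀ u ∂μ01))).mono'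
          (hF1m.mul hF1m).aestronglyMeasurable
          (Filter.Eventually.of_forall fun v => ?_)
        show ‖iterK W f₀ 1 v * iterK W f₀ 1 v‖ ≤ (∫ u, f₀ u ∂μ01) * ∫ u, f₀ u ∂μ01
        rw [Real.norm_eq_abs, abs_of_nonneg (mul_self_nonneg _)]
        exact mul_le_mul (hF1ub v) (hF1ub v) (hF10 v)
          (integral_nonneg fun u => hf₀0 u)
      have hbd : ∀ᵐ v ∂μ01, |(T x : ℝ → ℝ) v| ≤ iterK W f₀ 1 v := by
        filter_upwards [hT x] with v hv
        rw [hv]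
        have habs : |∫ u, W u v * (x : ℝ → ℝ) u ∂μ01|
            ≤ ∫ u, |W u v * (x : ℝ → ℝ) u| ∂μ01 := by
          have h := norm_integral_le_integral_norm (f := fun u => W u v * (x : ℝ → ℝ) u)
            (μ := μ01)
          simp only [Real.norm_eq_abs] at h
          exact h
        refine habs.trans ?_
        have heq : ∫ u, |W u v * (x : ℝ → ℝ) u| ∂μ01 = ∫ u, W u v * f₀ u ∂μ01 := by
          refine integral_congr_ae (hxeq.mono fun u hu => ?_)
          show |W u v * (x : ℝ → ℝ) u| = W u v * f₀ u
          rw [abs_mul, abs_of_nonneg (hW0 u v), hu]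
        rw [heq, iterK_succ]
        exact le_rfl
      have hTx2 : ∫ v, (T x : ℝ → ℝ) v * (T x : ℝ → ℝ) v ∂μ01
          ≤ ∫ v, iterK W f₀ 1 v * iterK W f₀ 1 v ∂μ01 := by
        refine integral_mono_ae ?_ hF1int2 ?_
        · have := (Lp.memLp (T x)).integrable_sq
          simpa only [pow_two] using this
        · filter_upwards [hbd] with v hv
          calc (T x : ℝ → ℝ) v * (T x : ℝ → ℝ) v
              = |(T x : ℝ → ℝ) v| * |(T x : ℝ → ℝ) v| := (abs_mul_abs_self _).symm
          _ ≤ iterK W f₀ 1 v * iterK W f₀ 1 v :=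
              mul_le_mul hv hv (abs_nonneg _) (hF10 v)
      have hTnorm2 : ‖T x‖^2 = ∫ v, (T x : ℝ → ℝ) v * (T x : ℝ → ℝ) v ∂μ01 := by
        have h1 : (inner ℝ (T x) (T x) : ℝ)
            = ∫ v, (inner ℝ ((T x : ℝ → ℝ) v) ((T x : ℝ → ℝ) v) : ℝ) ∂μ01 :=
          L2.inner_def (T x) (T x)
        rw [real_inner_self_eq_norm_sq] at h1
        simp only [RCLike.inner_apply, starRingEnd_apply, star_trivial] at h1
        exact h1
      have hfinal : ‖T x‖^2 ≤ cutNorm W := by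
        rw [hTnorm2]; exact le_trans hTx2 hkey
      exact (Real.le_sqrt (norm_nonneg _) hc0).2 hfinal
    have hTnorm : ‖T‖ ≤ Real.sqrt (cutNorm W) := by
      refine ContinuousLinearMap.opNorm_le_bound T (Real.sqrt_nonneg _) fun x => ?_
      by_cases hx : x = 0
      · simp [hx]
      · have hxpos : 0 < ‖x‖ := norm_pos_iff.2 hx
        have h1 : ‖(‖x‖⁻¹ • x : Lp ℝ 2 μ01)‖ ≤ 1 := by
          rw [norm_smul, norm_inv, norm_norm, inv_mul_cancel₀ (ne_of_gt hxpos)]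
        have h2 := hup (‖x‖⁻¹ • x) h1
        rw [_root_.map_smul, norm_smul, norm_inv, norm_norm] at h2
        calc ‖T x‖ = ‖x‖ * (‖x‖⁻¹ * ‖T x‖) := by field_simp
        _ ≤ ‖x‖ * Real.sqrt (cutNorm W) :=
            mul_le_mul_of_nonneg_left h2 (le_of_lt hxpos)
        _ = Real.sqrt (cutNorm W) * ‖x‖ := mul_comm _ _
    refine le_trans hTnorm (Real.sqrt_le_sqrt ?_)
    linarith
end

section
/- Let H be a separable real Hilbert space. For every compact self-adjoint bounded linear operator T on H and every ε > 0 there exists a finite-rank self-adjoint operator T' on H with ‖T − T'‖ ≤ ε (operator norm) such that all nonzero eigenvalues of T' are simple (one-dimensional eigenspaces) and pairwise distinct. In other words, the set of finite-rank self-adjoint operators whose nonzero eigenvalues are pairwise distinct and simple is dense, with respect to the operator norm, in the set of compact self-adjoint operators on H. -/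
open scoped RealInnerProductSpace
open Filter Topology Finset

section Aux

variable {H : Type*} [NormedAddCommGroup H] [InnerProductSpace ℝ H] [CompleteSpace H]

lemma quad_bound (T : H →L[ℝ] H) {M : ℝ} (hM : 0 ≤ M)
    (h : ∀ x : H, ‖x‖ = 1 → |⟪T x, x⟫| ≤ M) (z : H) : |⟪T z, z⟫| ≤ M * ‖z‖ ^ 2 := by
  rcases eq_or_ne z 0 with rfl | hz
  · simp
  · have hnz : ‖z‖ ≠ 0 := norm_ne_zero_iff.2 hz
    have h1 : ‖(‖z‖⁻¹ • z)‖ = 1 := by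
      rw [norm_smul, norm_inv, norm_norm, inv_mul_cancel₀ hnz]
    have := h _ h1
    rw [map_smul, real_inner_smul_left, real_inner_smul_right] at this
    rw [abs_mul, abs_mul, abs_inv, abs_norm] at this
    have h2 : (0:ℝ) < ‖z‖ := norm_pos_iff.2 hz
    calc |⟪T z, z⟫| = ‖z‖ * (‖z‖ * (‖z‖⁻¹ * (‖z‖⁻¹ * |⟪T z, z⟫|))) := by
          field_simp
      _ ≤ ‖z‖ * (‖z‖ * M) := by
          refine mul_le_mul_of_nonneg_left (mul_le_mul_of_nonneg_left ?_ h2.le) h2.le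
          exact this
      _ = M * ‖z‖ ^ 2 := by ring

lemma norm_le_of_quad (T : H →L[ℝ] H) (hsa : IsSelfAdjoint T) {M : ℝ} (hM : 0 ≤ M)
    (h : ∀ x : H, ‖x‖ = 1 → |⟪T x, x⟫| ≤ M) : ‖T‖ ≤ M := by
  have hsym := hsa.isSymmetric
  have key : ∀ x y : H, ⟪T x, y⟫ ≤ M / 4 * (‖x + y‖ ^ 2 + ‖x - y‖ ^ 2) := by
    intro x y
    have e1 : ⟪T (x + y), x + y⟫ - ⟪T (x - y), x - y⟫ = 4 * ⟪T x, y⟫ := by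
      have hyx : ⟪T y, x⟫ = ⟪T x, y⟫ := by
        exact (hsym y x).trans (real_inner_comm (T x) y)
      simp only [map_add, map_sub, inner_add_left, inner_add_right, inner_sub_left,
        inner_sub_right]
      linarith [hyx]
    have b1 := quad_bound T hM h (x + y)
    have b2 := quad_bound T hM h (x - y)
    have := abs_le.1 b1
    have := abs_le.1 b2
    nlinarith [abs_le.1 b1, abs_le.1 b2]
  have bound : ∀ x y : H, ‖x‖ ≤ 1 → ‖y‖ ≤ 1 → ⟪T x, y⟫ ≤ M := by
    intro x y hx hy
    have := key x y
    have p : ‖x + y‖ ^ 2 + ‖x - y‖ ^ 2 = 2 * (‖x‖ ^ 2 + ‖y‖ ^ 2) := by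
      have := norm_add_sq_real x y
      have := norm_sub_sq_real x y
      linarith
    have hx2 : ‖x‖ ^ 2 ≤ 1 := by nlinarith [norm_nonneg x]
    have hy2 : ‖y‖ ^ 2 ≤ 1 := by nlinarith [norm_nonneg y]
    nlinarith
  refine ContinuousLinearMap.opNorm_le_bound T hM ?_
  intro x
  rcases eq_or_ne x 0 with rfl | hx
  · simp
  rcases eq_or_ne (T x) 0 with h0 | h0
  · rw [h0]; simp; positivity
  have hnx : (0:ℝ) < ‖x‖ := norm_pos_iff.2 hx
  have hnTx : (0:ℝ) < ‖T x‖ := norm_pos_iff.2 h0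
  have := bound (‖x‖⁻¹ • x) (‖T x‖⁻¹ • T x) (by rw [norm_smul, norm_inv, norm_norm, inv_mul_cancel₀ hnx.ne']) (by rw [norm_smul, norm_inv, norm_norm, inv_mul_cancel₀ hnTx.ne'])
  rw [map_smul, real_inner_smul_left, real_inner_smul_right, real_inner_self_eq_norm_sq] at this
  have h3 : ‖x‖⁻¹ * (‖T x‖⁻¹ * ‖T x‖ ^ 2) = ‖T x‖ / ‖x‖ := by
    field_simp
  rw [h3] at this
  calc ‖T x‖ = (‖T x‖ / ‖x‖) * ‖x‖ := by field_simp
    _ ≤ M * ‖x‖ := mul_le_mul_of_nonneg_right this hnx.le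

noncomputable def rk (v : H) : H →L[ℝ] H := (innerSL ℝ v).smulRight v

lemma rk_apply (v x : H) : rk v x = ⟪v, x⟫ • v := rfl

lemma rk_compact (v : H) : IsCompactOperator (⇑(rk v)) := by
  rw [isCompactOperator_iff_exists_mem_nhds_image_subset_compact]
  refine ⟨Metric.ball 0 1, Metric.ball_mem_nhds 0 one_pos,
    (fun c : ℝ => c • v) '' Set.Icc (-‖v‖) ‖v‖, ?_, ?_⟩
  · exact isCompact_Icc.image (continuous_id.smul continuous_const)
  · rintro _ ⟨x, hx, rfl⟩
    refine ⟨⟪v, x⟫, ?_, rfl⟩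
    have h1 : |⟪v, x⟫| ≤ ‖v‖ * ‖x‖ := abs_real_inner_le_norm v x
    have h2 : ‖x‖ < 1 := by simpa using hx
    constructor <;> nlinarith [norm_nonneg v, norm_nonneg x, abs_le.1 h1]

lemma rk_sa (v : H) : IsSelfAdjoint (rk v) := by
  rw [ContinuousLinearMap.isSelfAdjoint_iff_isSymmetric]
  intro x y
  simp only [ContinuousLinearMap.coe_coe, rk_apply, real_inner_smul_left,
    real_inner_smul_right]
  rw [real_inner_comm x v]
  ring

lemma clm_sum_compact {ι : Type*} (s : Finset ι) (f : ι → H →L[ℝ] H)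
    (h : ∀ i ∈ s, IsCompactOperator (⇑(f i))) :
    IsCompactOperator (⇑(∑ i ∈ s, f i)) := by
  classical
  induction s using Finset.cons_induction with
  | empty => simpa using isCompactOperator_zero
  | cons a s ha ih =>
    rw [Finset.sum_cons, ContinuousLinearMap.coe_add']
    exact (h a (Finset.mem_cons_self a s)).add
      (ih fun i hi => h i (Finset.mem_cons_of_mem hi))

lemma sum_rk_sa {n : ℕ} (c : Fin n → ℝ) (v : Fin n → H) :
    IsSelfAdjoint (∑ i, c i • rk (v i)) :=
  by
  have h : ∀ i : Fin n, star (c i • rk (v i)) = c i • rk (v i) := fun i => by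
    rw [star_smul, star_trivial, (rk_sa (v i)).star_eq]
  show star _ = _
  rw [star_sum]
  exact Finset.sum_congr rfl fun i _ => h i

lemma sum_rk_compact {n : ℕ} (c : Fin n → ℝ) (v : Fin n → H) :
    IsCompactOperator (⇑(∑ i, c i • rk (v i))) := by
  refine clm_sum_compact _ _ fun i _ => ?_
  have := (rk_compact (v i)).smul (c i)
  rwa [ContinuousLinearMap.coe_smul']

lemma sum_rk_norm_le {n : ℕ} (c : Fin n → ℝ) (v : Fin n → H) (hv : ∀ i, ‖v i‖ = 1) :
    ‖∑ i, c i • rk (v i)‖ ≤ ∑ i, |c i| := by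
  refine le_trans (norm_sum_le _ _) (Finset.sum_le_sum fun i _ => ?_)
  rw [norm_smul (c i) (rk (v i)), Real.norm_eq_abs]
  have : ‖rk (v i)‖ ≤ 1 := by
    refine ContinuousLinearMap.opNorm_le_bound _ zero_le_one fun x => ?_
    rw [rk_apply, norm_smul, Real.norm_eq_abs, hv i, one_mul, mul_one]
    calc |⟪v i, x⟫| ≤ ‖v i‖ * ‖x‖ := abs_real_inner_le_norm _ _
      _ = ‖x‖ := by rw [hv i, one_mul]
  calc |c i| * ‖rk (v i)‖ ≤ |c i| * 1 := by
        exact mul_le_mul_of_nonneg_left this (abs_nonneg _)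
    _ = |c i| := mul_one _

lemma sum_rk_apply_eq {n : ℕ} (c : Fin n → ℝ) (v : Fin n → H) (hv : Orthonormal ℝ v)
    (j : Fin n) : (∑ i, c i • rk (v i)) (v j) = c j • v j := by
  classical
  rw [ContinuousLinearMap.sum_apply]
  rw [Finset.sum_eq_single j]
  · rw [ContinuousLinearMap.smul_apply, rk_apply, orthonormal_iff_ite.1 hv j j]
    simp
  · intro i _ hij
    rw [ContinuousLinearMap.smul_apply, rk_apply, orthonormal_iff_ite.1 hv i j]
    simp [hij]
  · intro h; exact absurd (Finset.mem_univ j) h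

lemma exists_eigen (T : H →L[ℝ] H) (hsa : IsSelfAdjoint T) (hcpt : IsCompactOperator T)
    (hT : ‖T‖ ≠ 0) : ∃ (μ : ℝ) (v : H), ‖v‖ = 1 ∧ T v = μ • v ∧ |μ| = ‖T‖ := by
  set M := ‖T‖ with hMdef
  have hM : 0 < M := lt_of_le_of_ne (norm_nonneg T) (Ne.symm hT)
  have step : ∀ n : ℕ, ∃ x : H, ‖x‖ = 1 ∧ M - 1/(n+1) < |⟪T x, x⟫| := by
    intro n
    by_contra hcon
    push_neg at hcon
    have hlt : (0:ℝ) < 1/(n+1) := by positivity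
    have h1 : ‖T‖ ≤ max (M - 1/(n+1)) 0 := by
      refine norm_le_of_quad T hsa (le_max_right _ _) fun x hx => ?_
      exact le_trans (hcon x hx) (le_max_left _ _)
    have : max (M - 1/(n+1)) 0 < M := max_lt (by linarith) hM
    rw [← hMdef] at h1
    linarith
  choose x hx1 hx2 using step
  set a : ℕ → ℝ := fun n => ⟪T (x n), x n⟫ with ha
  have haM : ∀ n, |a n| ≤ M := by
    intro n
    calc |a n| ≤ ‖T (x n)‖ * ‖x n‖ := abs_real_inner_le_norm _ _
      _ ≤ ‖T‖ * ‖x n‖ * ‖x n‖ := by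
          exact mul_le_mul_of_nonneg_right (T.le_opNorm _) (norm_nonneg _)
      _ = M := by rw [hx1]; ring
  have habs : Tendsto (fun n => |a n|) atTop (𝓝 M) := by
    have hlow : Tendsto (fun n : ℕ => M - 1/(n+1 : ℝ)) atTop (𝓝 M) := by
      have : Tendsto (fun n : ℕ => 1 / ((n : ℝ) + 1)) atTop (𝓝 0) :=
        tendsto_one_div_add_atTop_nhds_zero_nat
      simpa using tendsto_const_nhds.sub this
    exact tendsto_of_tendsto_of_tendsto_of_le_of_le hlow tendsto_const_nhds
      (fun n => (hx2 n).le) haM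
  -- compact image
  obtain ⟨K, hK, hTK⟩ := IsCompactOperator.image_closedBall_subset_compact (f := (T : H →ₗ[ℝ] H)) (𝕜₁ := ℝ) hcpt 1
  have hmem : ∀ n, T (x n) ∈ K := by
    intro n
    exact hTK ⟨x n, by simp [Metric.mem_closedBall, hx1 n], rfl⟩
  obtain ⟨y, hyK, φ, hφ, hφlim⟩ := hK.tendsto_subseq hmem
  have haIcc : ∀ n, a (φ n) ∈ Set.Icc (-M) M := fun n => abs_le.1 (haM (φ n))
  obtain ⟨μ, hμIcc, ψ, hψ, hψlim⟩ := (isCompact_Icc).tendsto_subseq haIcc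
  set σ : ℕ → ℕ := φ ∘ ψ with hσ
  have hσmono : StrictMono σ := hφ.comp hψ
  have hTlim : Tendsto (fun n => T (x (σ n))) atTop (𝓝 y) :=
    hφlim.comp hψ.tendsto_atTop
  have halim : Tendsto (fun n => a (σ n)) atTop (𝓝 μ) := hψlim
  have hμM : |μ| = M := by
    have h1 : Tendsto (fun n => |a (σ n)|) atTop (𝓝 |μ|) := halim.abs
    have h2 : Tendsto (fun n => |a (σ n)|) atTop (𝓝 M) :=
      habs.comp hσmono.tendsto_atTop
    exact tendsto_nhds_unique h1 h2
  have hμ0 : μ ≠ 0 := by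
    intro h; rw [h] at hμM; simp at hμM; exact hM.ne' hμM.symm
  -- the defect goes to 0
  have hdefect : Tendsto (fun n => ‖T (x (σ n)) - a (σ n) • x (σ n)‖) atTop (𝓝 0) := by
    have hsq : ∀ n, ‖T (x n) - a n • x n‖ ^ 2 ≤ M ^ 2 - (a n) ^ 2 := by
      intro n
      have e : ‖T (x n) - a n • x n‖ ^ 2
          = ‖T (x n)‖ ^ 2 - 2 * a n * ⟪T (x n), x n⟫ + (a n) ^ 2 * ‖x n‖ ^ 2 := by
        rw [norm_sub_sq_real, real_inner_smul_right, norm_smul, Real.norm_eq_abs, mul_pow,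
          sq_abs]
        ring
      have hTn : ‖T (x n)‖ ≤ M := by
        calc ‖T (x n)‖ ≤ ‖T‖ * ‖x n‖ := T.le_opNorm _
          _ = M := by rw [hx1]; ring
      have : ‖T (x n)‖ ^ 2 ≤ M ^ 2 := by nlinarith [norm_nonneg (T (x n))]
      rw [e, hx1]
      have han : ⟪T (x n), x n⟫ = a n := rfl
      rw [han]
      nlinarith
    have hle : ∀ n, ‖T (x (σ n)) - a (σ n) • x (σ n)‖ ≤ Real.sqrt (M^2 - a (σ n)^2) := by
      intro n
      rw [Real.le_sqrt (norm_nonneg _)]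
      · exact hsq (σ n)
      · nlinarith [haM (σ n), sq_abs (a (σ n)), abs_nonneg (a (σ n)), hM.le]
    have hsqrt : Tendsto (fun n => Real.sqrt (M^2 - a (σ n)^2)) atTop (𝓝 0) := by
      have h1 : Tendsto (fun n => M^2 - a (σ n)^2) atTop (𝓝 (M^2 - μ^2)) :=
        tendsto_const_nhds.sub (halim.pow 2)
      have h2 : M^2 - μ^2 = 0 := by
        have := hμM
        nlinarith [sq_abs μ]
      rw [h2] at h1
      simpa [Function.comp_def] using (Real.continuous_sqrt.tendsto 0).comp h1
    exact squeeze_zero (fun n => norm_nonneg _) hle hsqrt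
  -- x (σ n) converges to v := μ⁻¹ • y
  set v : H := μ⁻¹ • y with hv
  have hxlim : Tendsto (fun n => x (σ n)) atTop (𝓝 v) := by
    have h1 : Tendsto (fun n => a (σ n) • x (σ n)) atTop (𝓝 y) := by
      have : (fun n => a (σ n) • x (σ n))
          = fun n => T (x (σ n)) - (T (x (σ n)) - a (σ n) • x (σ n)) := by
        funext n; abel
      rw [this]
      have h0 : Tendsto (fun n => T (x (σ n)) - a (σ n) • x (σ n)) atTop (𝓝 0) := by
        exact tendsto_zero_iff_norm_tendsto_zero.2 hdefect
      simpa using hTlim.sub h0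
    have h2 : Tendsto (fun n => (a (σ n))⁻¹ • (a (σ n) • x (σ n))) atTop (𝓝 (μ⁻¹ • y)) :=
      Tendsto.smul (halim.inv₀ hμ0) h1
    have h3 : ∀ᶠ n in atTop, (a (σ n))⁻¹ • (a (σ n) • x (σ n)) = x (σ n) := by
      have hev : ∀ᶠ n in atTop, a (σ n) ≠ 0 := by
        have : ∀ᶠ n in atTop, |a (σ n)| > M/2 := by
          have h4 := halim.abs
          rw [hμM] at h4
          exact h4.eventually (eventually_gt_nhds (by linarith))
        filter_upwards [this] with n hn
        intro h0; rw [h0] at hn; simp at hn; linarith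
      filter_upwards [hev] with n hn
      rw [smul_smul, inv_mul_cancel₀ hn, one_smul]
    exact Tendsto.congr' h3 h2
  have hvnorm : ‖v‖ = 1 := by
    have := (continuous_norm.tendsto v).comp hxlim
    have h2 : Tendsto (fun n => ‖x (σ n)‖) atTop (𝓝 1) := by
      simp only [hx1]; exact tendsto_const_nhds
    exact tendsto_nhds_unique this h2
  have hTv : T v = μ • v := by
    have h1 : Tendsto (fun n => T (x (σ n))) atTop (𝓝 (T v)) :=
      (T.continuous.tendsto v).comp hxlim
    have h2 := tendsto_nhds_unique h1 hTlim
    rw [h2, hv, smul_smul, mul_inv_cancel₀ hμ0, one_smul]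
  exact ⟨μ, v, hvnorm, hTv, hμM⟩

lemma claimA (T : H →L[ℝ] H) (hsa : IsSelfAdjoint T) (hcpt : IsCompactOperator ⇑T)
    {ε : ℝ} (hε : 0 < ε) :
    ∃ (n : ℕ) (v : Fin n → H) (μ : Fin n → ℝ), Orthonormal ℝ v ∧
      (∀ i, T (v i) = μ i • v i) ∧ (∀ i, ε < |μ i|) ∧
      ‖T - ∑ i, μ i • rk (v i)‖ ≤ ε := by
  classical
  by_contra hcon
  push_neg at hcon
  -- every admissible family can be extended
  have key : ∀ (n : ℕ) (w : Fin n → H) (ν : Fin n → ℝ),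
      Orthonormal ℝ w → (∀ i, T (w i) = ν i • w i) → (∀ i, ε < |ν i|) →
      ∃ (x : H) (m : ℝ), Orthonormal ℝ (Fin.snoc w x : Fin (n+1) → H) ∧
        (∀ i : Fin (n+1), T ((Fin.snoc w x : Fin (n+1) → H) i)
          = (Fin.snoc ν m : Fin (n+1) → ℝ) i • (Fin.snoc w x : Fin (n+1) → H) i) ∧
        (∀ i : Fin (n+1), ε < |(Fin.snoc ν m : Fin (n+1) → ℝ) i|) := by
    intro n w ν hon heig hbig
    set S : H →L[ℝ] H := T - ∑ i, ν i • rk (w i) with hS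
    have hSsa : IsSelfAdjoint S := hsa.sub (sum_rk_sa ν w)
    have hScpt : IsCompactOperator (⇑S) := by
      have : (⇑S : H → H) = ⇑T - ⇑(∑ i, ν i • rk (w i)) := by
        funext x; simp [hS]
      rw [this]
      exact hcpt.sub (sum_rk_compact ν w)
    have hSnorm : ε < ‖S‖ := hcon n w ν hon heig hbig
    obtain ⟨m, x, hx1, hx2, hx3⟩ := exists_eigen S hSsa hScpt (ne_of_gt (hε.trans hSnorm))
    have hm : ε < |m| := by rw [hx3]; exact hSnorm
    have hm0 : m ≠ 0 := by
      intro h; rw [h] at hm; simp at hm; linarith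
    -- S kills the old vectors
    have hSw : ∀ i, S (w i) = 0 := by
      intro i
      rw [hS, ContinuousLinearMap.sub_apply, sum_rk_apply_eq ν w hon i, heig i, sub_self]
    -- x is orthogonal to the old vectors
    have horth : ∀ i, ⟪w i, x⟫ = 0 := by
      intro i
      have h1 : ⟪w i, S x⟫ = ⟪S (w i), x⟫ := (hSsa.isSymmetric (w i) x).symm
      rw [hSw i, hx2] at h1
      rw [real_inner_smul_right] at h1
      simp at h1
      rcases h1 with h | h
      · exact absurd h hm0
      · exact h
    -- T x = m • x
    have hTx : T x = m • x := by
      have : T x = S x + (∑ i, ν i • rk (w i)) x := by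
        rw [hS]; simp
      rw [this, hx2]
      have : (∑ i, ν i • rk (w i)) x = 0 := by
        rw [ContinuousLinearMap.sum_apply]
        refine Finset.sum_eq_zero fun i _ => ?_
        rw [ContinuousLinearMap.smul_apply, rk_apply, horth i]
        simp
      rw [this, add_zero]
    refine ⟨x, m, ?_, ?_, ?_⟩
    · rw [orthonormal_iff_ite]
      intro i j
      refine Fin.lastCases ?_ (fun i' => ?_) i
      · refine Fin.lastCases ?_ (fun j' => ?_) j
        · simp [Fin.snoc_last, real_inner_self_eq_norm_sq, hx1]
        · rw [Fin.snoc_last, Fin.snoc_castSucc, real_inner_comm, horth j']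
          simp [(Fin.castSucc_lt_last j').ne']
      · refine Fin.lastCases ?_ (fun j' => ?_) j
        · rw [Fin.snoc_castSucc, Fin.snoc_last, horth i']
          simp [(Fin.castSucc_lt_last i').ne]
        · rw [Fin.snoc_castSucc, Fin.snoc_castSucc, orthonormal_iff_ite.1 hon i' j']
          simp [Fin.castSucc_inj]
    · intro i
      refine Fin.lastCases ?_ ?_ i
      · rw [Fin.snoc_last, Fin.snoc_last, hTx]
      · intro i'
        rw [Fin.snoc_castSucc, Fin.snoc_castSucc, heig i']
    · intro i
      refine Fin.lastCases ?_ ?_ i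
      · rw [Fin.snoc_last]; exact hm
      · intro i'; rw [Fin.snoc_castSucc]; exact hbig i'
  -- build arbitrarily long admissible families
  have families : ∀ n : ℕ, ∃ (w : Fin n → H) (ν : Fin n → ℝ),
      Orthonormal ℝ w ∧ (∀ i, T (w i) = ν i • w i) ∧ (∀ i, ε < |ν i|) := by
    intro n
    induction n with
    | zero =>
      refine ⟨Fin.elim0, Fin.elim0, ?_, fun i => i.elim0, fun i => i.elim0⟩
      rw [orthonormal_iff_ite]; exact fun i => i.elim0
    | succ n ih =>
      obtain ⟨w, ν, h1, h2, h3⟩ := ih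
      obtain ⟨x, m, g1, g2, g3⟩ := key n w ν h1 h2 h3
      exact ⟨Fin.snoc w x, Fin.snoc ν m, g1, g2, g3⟩
  -- contradiction via total boundedness of the image of the unit ball
  obtain ⟨K, hK, hTK⟩ :=
    IsCompactOperator.image_closedBall_subset_compact (f := (T : H →ₗ[ℝ] H)) (𝕜₁ := ℝ) hcpt 1
  obtain ⟨t, htfin, htcover⟩ :=
    (Metric.totallyBounded_iff.1 hK.totallyBounded) (ε * (7/10)) (by positivity)
  haveI := htfin.fintype
  obtain ⟨w, ν, h1, h2, h3⟩ := families (Fintype.card t + 1)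
  have hwmem : ∀ i, T (w i) ∈ K := by
    intro i
    refine hTK ⟨w i, ?_, rfl⟩
    have hn : ‖w i‖ = 1 := h1.1 i
    simp [Metric.mem_closedBall, dist_eq_norm, hn]
  have hsel : ∀ i, ∃ y : t, T (w i) ∈ Metric.ball (y : H) (ε * (7/10)) := by
    intro i
    have := htcover (hwmem i)
    simp only [Set.mem_iUnion] at this
    obtain ⟨y, hy, hmem⟩ := this
    exact ⟨⟨y, hy⟩, hmem⟩
  choose g hg using hsel
  have hcard : Fintype.card t < Fintype.card (Fin (Fintype.card t + 1)) := by
    simp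
  obtain ⟨i, j, hij, hgij⟩ := Fintype.exists_ne_map_eq_of_card_lt g hcard
  -- distance estimate
  have hdist : dist (T (w i)) (T (w j)) < ε * (7/5) := by
    have hdi := hg i
    have hdj := hg j
    rw [Metric.mem_ball] at hdi hdj
    calc dist (T (w i)) (T (w j))
        ≤ dist (T (w i)) (g i : H) + dist (g i : H) (T (w j)) := dist_triangle _ _ _
      _ < ε * (7/10) + ε * (7/10) := by
          refine add_lt_add hdi ?_
          rw [dist_comm, hgij]
          exact hdj
      _ = ε * (7/5) := by ring
  have hfar : ε * (7/5) < dist (T (w i)) (T (w j)) := by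
    rw [h2 i, h2 j, dist_eq_norm]
    have hinner : ⟪w i, w j⟫ = 0 := h1.2 hij
    have : ‖ν i • w i - ν j • w j‖ ^ 2 = ν i ^ 2 + ν j ^ 2 := by
      rw [norm_sub_sq_real, real_inner_smul_left, real_inner_smul_right, hinner]
      rw [norm_smul, norm_smul, Real.norm_eq_abs, Real.norm_eq_abs, h1.1 i, h1.1 j]
      simp [mul_pow, sq_abs]
    have hi := h3 i
    have hj := h3 j
    have h5 : (ε * (7/5)) ^ 2 < ‖ν i • w i - ν j • w j‖ ^ 2 := by
      rw [this]
      nlinarith [sq_abs (ν i), sq_abs (ν j), abs_nonneg (ν i), abs_nonneg (ν j)]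
    nlinarith [norm_nonneg (ν i • w i - ν j • w j), hε]
  linarith

lemma exists_inj_perturb {n : ℕ} (μ : Fin n → ℝ) {δ : ℝ} (hδ : 0 < δ) :
    ∃ lam : Fin n → ℝ, Function.Injective lam ∧ ∀ i, |lam i - μ i| ≤ δ := by
  classical
  set B : Set ℝ :=
    (fun p : Fin n × Fin n => (μ p.1 - μ p.2) / ((p.2 : ℝ) - (p.1 : ℝ))) '' Set.univ with hB
  have hBfin : B.Finite := Set.Finite.image _ (Set.finite_univ)
  have hIoo : (Set.Ioo (0:ℝ) (δ / (n + 1))).Infinite := by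
    apply Set.Ioo_infinite
    positivity
  obtain ⟨c, hc⟩ := (hIoo.diff hBfin).nonempty
  obtain ⟨hcIoo, hcB⟩ := hc
  obtain ⟨hc0, hcδ⟩ := hcIoo
  refine ⟨fun i => μ i + c * ((i : ℝ) + 1), ?_, ?_⟩
  · intro i j hij
    by_contra hne
    have hvne : (i : ℝ) ≠ (j : ℝ) := by
      simp only [ne_eq, Nat.cast_inj]
      exact fun h => hne (Fin.ext h)
    have hd : ((j : ℝ) - (i : ℝ)) ≠ 0 := sub_ne_zero.2 (Ne.symm hvne)
    have : c = (μ i - μ j) / ((j : ℝ) - (i : ℝ)) := by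
      rw [eq_div_iff hd]
      linear_combination (-1 : ℝ) * hij
    exact hcB ⟨(i, j), Set.mem_univ _, this.symm⟩
  · intro i
    have h1 : |c * ((i : ℝ) + 1)| = c * ((i : ℝ) + 1) := by
      rw [abs_of_nonneg]; positivity
    simp only [add_sub_cancel_left, h1]
    have h2 : (i : ℝ) + 1 ≤ n + 1 := by
      have := i.isLt
      have : (i : ℝ) ≤ n := by exact_mod_cast le_of_lt this
      linarith
    calc c * ((i : ℝ) + 1) ≤ c * (n + 1) := by
          exact mul_le_mul_of_nonneg_left h2 hc0.le
      _ ≤ (δ / (n + 1)) * (n + 1) := by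
          refine mul_le_mul_of_nonneg_right hcδ.le (by positivity)
      _ = δ := by field_simp


end Aux

/-- finite-rank self-adjoint operators whose nonzero eigenvalues are pairwise
distinct and simple are dense (in operator norm) in the compact self-adjoint operators on a
separable real Hilbert space. -/
theorem stmt_12 {H : Type*} [NormedAddCommGroup H] [InnerProductSpace ℝ H]
    [CompleteSpace H] [TopologicalSpace.SeparableSpace H]
    (T : H →L[ℝ] H) (hsa : IsSelfAdjoint T) (hcpt : IsCompactOperator T)
    (ε : ℝ) (hε : 0 < ε) :
    ∃ T' : H →L[ℝ] H, IsSelfAdjoint T' ∧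
      FiniteDimensional ℝ (LinearMap.range (T' : H →ₗ[ℝ] H)) ∧
      ‖T - T'‖ ≤ ε ∧
      ∀ r : ℝ, r ≠ 0 → Module.End.HasEigenvalue (T' : H →ₗ[ℝ] H) r →
        Module.finrank ℝ (Module.End.eigenspace (T' : H →ₗ[ℝ] H) r) = 1 := by
  classical
  obtain ⟨n, v, μ, hon, heig, hbig, hnorm⟩ := claimA T hsa hcpt (half_pos hε)
  obtain ⟨lam, hinj, hclose⟩ := exists_inj_perturb μ (δ := ε / (2 * (n + 1)))
    (by positivity)
  set T' : H →L[ℝ] H := ∑ i, lam i • rk (v i) with hT'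
  have hvnorm : ∀ i, ‖v i‖ = 1 := fun i => hon.1 i
  have hT'apply : ∀ x, T' x = ∑ i, (lam i * ⟪v i, x⟫) • v i := by
    intro x
    rw [hT', ContinuousLinearMap.sum_apply]
    refine Finset.sum_congr rfl fun i _ => ?_
    rw [ContinuousLinearMap.smul_apply, rk_apply, smul_smul]
  refine ⟨T', sum_rk_sa lam v, ?_, ?_, ?_⟩
  · -- finite rank
    have hle : LinearMap.range (T' : H →ₗ[ℝ] H) ≤ Submodule.span ℝ (Set.range v) := by
      rintro _ ⟨x, rfl⟩
      show T' x ∈ _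
      rw [hT'apply]
      refine Submodule.sum_mem _ fun i _ => Submodule.smul_mem _ _ ?_
      exact Submodule.subset_span ⟨i, rfl⟩
    haveI : FiniteDimensional ℝ (Submodule.span ℝ (Set.range v)) :=
      FiniteDimensional.span_of_finite ℝ (Set.finite_range v)
    exact Submodule.finiteDimensional_of_le hle
  · -- norm estimate
    have hsplit : T - T' = (T - ∑ i, μ i • rk (v i)) + ∑ i, (μ i - lam i) • rk (v i) := by
      rw [hT']
      have : (∑ i, (μ i - lam i) • rk (v i))
          = (∑ i, μ i • rk (v i)) - ∑ i, lam i • rk (v i) := by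
        rw [← Finset.sum_sub_distrib]
        exact Finset.sum_congr rfl fun i _ => (sub_smul _ _ _)
      rw [this]
      abel
    rw [hsplit]
    have h2 : ‖∑ i, (μ i - lam i) • rk (v i)‖ ≤ ∑ i, |μ i - lam i| :=
      sum_rk_norm_le _ _ hvnorm
    have h3 : (∑ i : Fin n, |μ i - lam i|) ≤ ε / 2 := by
      have : ∀ i : Fin n, |μ i - lam i| ≤ ε / (2 * (n + 1)) := by
        intro i
        rw [abs_sub_comm]
        exact hclose i
      calc (∑ i : Fin n, |μ i - lam i|) ≤ ∑ _i : Fin n, ε / (2 * (n + 1)) :=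
            Finset.sum_le_sum fun i _ => this i
        _ = n * (ε / (2 * (n + 1))) := by simp [Finset.sum_const, nsmul_eq_mul]
        _ ≤ ε / 2 := by
            have he : ((n:ℝ)+1) * (ε / (2 * ((n:ℝ) + 1))) = ε / 2 := by
              field_simp
            calc (n:ℝ) * (ε / (2 * ((n:ℝ) + 1)))
                ≤ ((n:ℝ)+1) * (ε / (2 * ((n:ℝ) + 1))) := by
                  refine mul_le_mul_of_nonneg_right (by linarith) (by positivity)
              _ = ε / 2 := he
    calc ‖(T - ∑ i, μ i • rk (v i)) + ∑ i, (μ i - lam i) • rk (v i)‖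
        ≤ ‖T - ∑ i, μ i • rk (v i)‖ + ‖∑ i, (μ i - lam i) • rk (v i)‖ := norm_add_le _ _
      _ ≤ ε / 2 + ε / 2 := add_le_add hnorm (le_trans h2 h3)
      _ = ε := by ring
  · -- eigenvalue simplicity
    intro r hr hev
    obtain ⟨x, hx⟩ := hev.exists_hasEigenvector
    have hx0 : x ≠ 0 := hx.right
    have hxeq : T' x = r • x := hx.apply_eq_smul
    have hco : ∀ (y : H), T' y = r • y → ∀ j, lam j ≠ r → ⟪v j, y⟫ = 0 := by
      intro y hy j hj
      have h1 : ⟪v j, T' y⟫ = lam j * ⟪v j, y⟫ := by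
        rw [hT'apply, inner_sum, Finset.sum_eq_single j]
        · rw [real_inner_smul_right, orthonormal_iff_ite.1 hon j j]
          simp
        · intro i _ hij
          rw [real_inner_smul_right, orthonormal_iff_ite.1 hon j i]
          simp [Ne.symm hij]
        · intro h; exact absurd (Finset.mem_univ j) h
      have h2 : ⟪v j, T' y⟫ = r * ⟪v j, y⟫ := by rw [hy, real_inner_smul_right]
      rw [h1] at h2
      by_contra h0
      exact hj (mul_right_cancel₀ h0 h2)
    have hexp : ∀ y : H, T' y = r • y →
        y = ∑ i, (if lam i = r then ⟪v i, y⟫ else 0) • v i := by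
      intro y hy
      have h2 : r⁻¹ • T' y = ∑ i, (if lam i = r then ⟪v i, y⟫ else 0) • v i := by
        rw [hT'apply, Finset.smul_sum]
        refine Finset.sum_congr rfl fun i _ => ?_
        by_cases hlr : lam i = r
        · rw [if_pos hlr, smul_smul, hlr]
          congr 1
          field_simp
        · rw [if_neg hlr, hco y hy i hlr]
          simp
      rw [← h2, hy, smul_smul, inv_mul_cancel₀ hr, one_smul]
    -- there is an index i₀ with lam i₀ = r
    have hxexp := hexp x hxeq
    have hex : ∃ i₀, lam i₀ = r := by
      by_contra hno
      push_neg at hno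
      apply hx0
      rw [hxexp]
      refine Finset.sum_eq_zero fun i _ => ?_
      rw [if_neg (hno i)]
      simp
    obtain ⟨i₀, hi₀⟩ := hex
    have huniq : ∀ i, lam i = r → i = i₀ := by
      intro i hi
      exact hinj (by rw [hi, hi₀])
    -- eigenspace = span {v i₀}
    have hspan : Module.End.eigenspace (T' : H →ₗ[ℝ] H) r = Submodule.span ℝ {v i₀} := by
      apply le_antisymm
      · intro y hy
        rw [Module.End.mem_eigenspace_iff] at hy
        have hy' : T' y = r • y := hy
        have := hexp y hy'
        rw [this]
        have : (∑ i, (if lam i = r then ⟪v i, y⟫ else 0) • v i)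
            = ⟪v i₀, y⟫ • v i₀ := by
          rw [Finset.sum_eq_single i₀]
          · rw [if_pos hi₀]
          · intro i _ hii
            have : lam i ≠ r := fun h => hii (huniq i h)
            rw [if_neg this]
            simp
          · intro h; exact absurd (Finset.mem_univ i₀) h
        rw [this]
        exact Submodule.smul_mem _ _ (Submodule.subset_span rfl)
      · rw [Submodule.span_le, Set.singleton_subset_iff]
        rw [SetLike.mem_coe, Module.End.mem_eigenspace_iff]
        show T' (v i₀) = r • v i₀
        rw [hT', sum_rk_apply_eq lam v hon i₀, hi₀]
    rw [hspan]
    exact finrank_span_singleton (by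
      intro h
      have := hvnorm i₀
      rw [h] at this
      simp at this)
end
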